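/- arXiv:1710.00223 — 11 statements merged into one kernel-verified Lean document; each statement's English description precedes it below -/
import Mathlib

section
/- Let G be a finite simple graph and X ⊆ V(G) a set of d vertices such that the induced subgraph G \ X is a cluster graph. Then G admits a conflict-free closed neighborhood coloring with at most d + 2 colors; that is, χcf[G] ≤ d + 2. -/
/-!
Give the `d` vertices of `X` pairwise distinct private colours. Outside `X` the graph is a
disjoint union of cliques; colour one vertex of each clique `1` and all the others `0`. A vertex
of `X` sees its private colour exactly once, and a vertex `v ∉ X` sees colour `1` exactly once,
because the neighbours of `v` outside `X` are exactly the other vertices of its clique.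
-/

def IsCFCN {W S : Type*} (H : SimpleGraph W) (c : W → S) : Prop :=
  ∀ v : W, ∃ a : S, ∃! u : W, (H.Adj v u ∨ u = v) ∧ c u = a

section

variable {V W S T : Type*}

theorem IsCFCN.comp_injective {H : SimpleGraph W} {c : W → S} (hc : IsCFCN H c) {f : S → T}
    (hf : f.Injective) : IsCFCN H (f ∘ c) := fun v ↦ by
  obtain ⟨a, u, ⟨hu, rfl⟩, huniq⟩ := hc v
  exact ⟨f (c u), u, ⟨hu, rfl⟩, fun w hw ↦ huniq w ⟨hw.1, hf hw.2⟩⟩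

theorem IsCFCN.exists_of_induce_compl {G : SimpleGraph V} {X : Set V} {c : ↥Xᶜ → S}
    (hc : IsCFCN (G.induce Xᶜ) c) : ∃ c' : V → X ⊕ S, IsCFCN G c' := by
  classical
  refine ⟨fun v ↦ if hv : v ∈ X then .inl ⟨v, hv⟩ else .inr (c ⟨v, hv⟩), fun v ↦ ?_⟩
  by_cases hv : v ∈ X
  · refine ⟨.inl ⟨v, hv⟩, v, ⟨.inr rfl, dif_pos hv⟩, fun w ⟨_, hw⟩ ↦ ?_⟩
    by_cases hwX : w ∈ X
    · simpa [dif_pos hwX] using hw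
    · simp [dif_neg hwX] at hw
  · obtain ⟨a, u, ⟨hu, rfl⟩, huniq⟩ := hc ⟨v, hv⟩
    refine ⟨.inr (c u), u, ⟨hu.imp id (congrArg Subtype.val), dif_neg u.2⟩,
      fun w ⟨hvw, hw⟩ ↦ ?_⟩
    by_cases hwX : w ∈ X
    · simp [dif_pos hwX] at hw
    · simp only [dif_neg hwX, Sum.inr.injEq] at hw
      exact congrArg Subtype.val (huniq ⟨w, hwX⟩ ⟨hvw.imp id Subtype.ext, hw⟩)

namespace SimpleGraph

theorem isCompleteMultipartite_compl_of_adj_trans {H : SimpleGraph W}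
    (hH : ∀ u v w, H.Adj u v → H.Adj v w → u ≠ w → H.Adj u w) :
    Hᶜ.IsCompleteMultipartite where
  trans u v w huv hvw := by
    simp only [compl_adj, not_and_not_right] at huv hvw ⊢
    intro huw
    rcases eq_or_ne u v with rfl | huv'
    · exact hvw huw
    rcases eq_or_ne v w with rfl | hvw'
    · exact huv huw
    exact hH u v w (huv huv') (hvw hvw') huw

/-- The classes of the non-adjacency setoid of `Hᶜ` are the closed neighbourhoods in `H`;
colour the chosen representative of each class `true`. -/
theorem exists_isCFCN_bool_of_isCompleteMultipartite_compl {H : SimpleGraph W}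
    (hH : Hᶜ.IsCompleteMultipartite) : ∃ c : W → Bool, IsCFCN H c := by
  classical
  let s := hH.setoid
  have hr : ∀ u v, s.r u v ↔ H.Adj v u ∨ u = v := fun u v ↦ by
    change ¬Hᶜ.Adj u v ↔ _
    rw [compl_adj, adj_comm]
    tauto
  refine ⟨fun v ↦ decide ((Quotient.mk s v).out = v),
    fun v ↦ ⟨true, (Quotient.mk s v).out, ⟨(hr _ _).1 (Quotient.mk_out v), ?_⟩, ?_⟩⟩
  · simp [Quotient.out_eq]
  · rintro w ⟨hw, hcw⟩
    have hwv : Quotient.mk s w = Quotient.mk s v := Quotient.sound ((hr w v).2 hw)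
    rw [decide_eq_true_iff, hwv] at hcw
    exact hcw.symm

end SimpleGraph

end

theorem cfcn_le_cluster_deletion_add_two_general {V : Type*}
    (G : SimpleGraph V) (X : Finset V) (d : ℕ) (hX : X.card = d)
    (hcluster : ∀ u v w : V, u ∉ X → v ∉ X → w ∉ X →
      G.Adj u v → G.Adj v w → u ≠ w → G.Adj u w) :
    ∃ c : V → Fin (d + 2), IsCFCN G c := by
  have hC : (G.induce (X : Set V)ᶜ)ᶜ.IsCompleteMultipartite :=
    SimpleGraph.isCompleteMultipartite_compl_of_adj_trans fun u v w huv hvw huw ↦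
      hcluster u v w u.2 v.2 w.2 huv hvw (Subtype.coe_injective.ne huw)
  obtain ⟨c, hc⟩ := SimpleGraph.exists_isCFCN_bool_of_isCompleteMultipartite_compl hC
  obtain ⟨c', hc'⟩ := hc.exists_of_induce_compl
  subst hX
  let e : (X : Set V) ⊕ Bool ≃ Fin (X.card + 2) :=
    (X.equivFin.sumCongr finTwoEquiv.symm).trans finSumFinEquiv
  exact ⟨e ∘ c', hc'.comp_injective e.injective⟩

/-- If deleting the `d`-element vertex set `X` from `G` leaves a cluster graph
(every connected component is a clique, i.e. the induced graph is `P₃`-free),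
then `G` has a CF-CN coloring with at most `d + 2` colors. -/
theorem cfcn_le_cluster_deletion_add_two {V : Type*} [Fintype V] [DecidableEq V]
    (G : SimpleGraph V) (X : Finset V) (d : ℕ) (hX : X.card = d)
    (hcluster : ∀ u v w : V, u ∉ X → v ∉ X → w ∉ X →
      G.Adj u v → G.Adj v w → u ≠ w → G.Adj u w) :
    ∃ c : V → Fin (d + 2), IsCFCN G c :=
  cfcn_le_cluster_deletion_add_two_general G X d hX hcluster
end

section
/- Let G be a finite simple graph, X ⊆ V(G) with G \ X a cluster graph, let C be a connected component (a clique) of G \ X, let Y ⊆ X, and let T = {u ∈ C : N(u) ∩ X = Y}. Suppose |T| > k + 1 and let G' be the graph obtained from G by deleting all but k + 1 of the vertices of T. Then G admits a conflict-free closed neighborhood coloring with k colors if and only if G' does. -/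
/-! Every vertex of `T` has closed neighbourhood `C ∪ Y`, so the vertices of `T` are pairwise
closed twins and every closed neighbourhood contains either all of `T` or none of it. A closed
neighbourhood containing `T` only sees which colours are unique on `T` and which are absent from it.
With `k` colours some colour repeats on `T`, so a colouring of `G` moves to the `k + 1` surviving
vertices of `T` by giving each colour unique on `T` its own survivor and the repeated colour to the
remaining survivors; conversely a colouring of `G'` extends to `G` by giving the deleted vertices a
colour repeated among the survivors. -/

section

variable {W S : Type*}

namespace SimpleGraph

def closedNeighborSet (H : SimpleGraph W) (v : W) : Set W := {u | H.Adj v u ∨ u = v}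

variable {H : SimpleGraph W}

theorem mem_closedNeighborSet_comm {u v : W} :
    u ∈ H.closedNeighborSet v ↔ v ∈ H.closedNeighborSet u := by
  simp only [closedNeighborSet, Set.mem_ofPred_eq, H.adj_comm, eq_comm]

theorem subset_or_disjoint_closedNeighborSet_of_twins {T : Finset W}
    (htwin : ∀ t ∈ T, ∀ t' ∈ T, H.closedNeighborSet t = H.closedNeighborSet t') (v : W) :
    (T : Set W) ⊆ H.closedNeighborSet v ∨ Disjoint (T : Set W) (H.closedNeighborSet v) := by
  refine or_iff_not_imp_right.2 fun h t' ht' => ?_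
  obtain ⟨t, ht, htv⟩ := Set.not_disjoint_iff.1 h
  rw [mem_closedNeighborSet_comm, ← htwin t ht t' ht', ← mem_closedNeighborSet_comm]
  exact htv

theorem closedNeighborSet_eq_union_filter [DecidableRel H.Adj] {C X : Finset W}
    {t : W} (htC : t ∈ C) (hclique : ∀ v ∈ C, t ≠ v → H.Adj t v)
    (hclosed : ∀ v, v ∉ X → H.Adj t v → v ∈ C) :
    H.closedNeighborSet t = ↑C ∪ ↑(X.filter fun x => H.Adj t x) := by
  ext w
  simp only [closedNeighborSet, Set.mem_ofPred_eq, Set.mem_union, Finset.mem_coe,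
    Finset.mem_filter]
  constructor
  · rintro (hadj | rfl)
    · by_cases hw : w ∈ X
      exacts [Or.inr ⟨hw, hadj⟩, Or.inl (hclosed w hw hadj)]
    · exact Or.inl htC
  · rintro (hw | ⟨-, hadj⟩)
    · rcases eq_or_ne w t with rfl | hne
      exacts [Or.inr rfl, Or.inl (hclique w hw hne.symm)]
    · exact Or.inl hadj

end SimpleGraph

open SimpleGraph

def IsUniqueColorOn (c : W → S) (A : Set W) (a : S) : Prop := ∃! u, u ∈ A ∧ c u = a

theorem isCFCN_iff {H : SimpleGraph W} {c : W → S} :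
    IsCFCN H c ↔ ∀ v, ∃ a, IsUniqueColorOn c (H.closedNeighborSet v) a :=
  Iff.rfl

theorem isCFCN_induce_iff {H : SimpleGraph W} {s : Set W} {c : W → S} :
    IsCFCN (H.induce s) (fun v => c v) ↔
      ∀ v ∈ s, ∃ a, IsUniqueColorOn c (H.closedNeighborSet v ∩ s) a := by
  have hmem (v u : s) : ((H.induce s).Adj v u ∨ u = v) ↔ (u : W) ∈ H.closedNeighborSet v := by
    simp only [closedNeighborSet, Set.mem_ofPred_eq, comap_adj, Function.Embedding.subtype_apply,
      Subtype.ext_iff]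
  refine ⟨fun h v hv => ?_, fun h v => ?_⟩
  · obtain ⟨a, u, hu, huniq⟩ := h ⟨v, hv⟩
    refine ⟨a, u, ⟨⟨(hmem _ u).1 hu.1, u.2⟩, hu.2⟩, fun x hx => ?_⟩
    exact congrArg Subtype.val (huniq ⟨x, hx.1.2⟩ ⟨(hmem _ _).2 hx.1.1, hx.2⟩)
  · obtain ⟨a, u, hu, huniq⟩ := h v v.2
    refine ⟨a, ⟨u, hu.1.2⟩, ⟨(hmem _ _).2 hu.1.1, hu.2⟩, fun x hx => ?_⟩
    exact Subtype.ext (huniq x ⟨⟨(hmem _ _).1 hx.1, x.2⟩, hx.2⟩)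

theorem isUniqueColorOn_congr {c g : W → S} {A : Set W} {a : S} (h : Set.EqOn c g A) :
    IsUniqueColorOn c A a ↔ IsUniqueColorOn g A a :=
  existsUnique_congr fun u => and_congr_right fun hu => by rw [h hu]

theorem not_isUniqueColorOn_of_ne {c : W → S} {A : Set W} {x y : W} (hx : x ∈ A) (hy : y ∈ A)
    (hxy : x ≠ y) (hcxy : c x = c y) : ¬IsUniqueColorOn c A (c x) :=
  fun ⟨_, _, hu⟩ => hxy ((hu x ⟨hx, rfl⟩).trans (hu y ⟨hy, hcxy.symm⟩).symm)

def PreservesUniqueAndAbsent (c : W → S) (P : Set W) (g : W → S) (Q : Set W) : Prop :=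
  ∀ a, (IsUniqueColorOn c P a → IsUniqueColorOn g Q a) ∧
    ((∀ u ∈ P, c u ≠ a) → ∀ u ∈ Q, g u ≠ a)

theorem PreservesUniqueAndAbsent.exists_isUniqueColorOn {c g : W → S} {A B P Q : Set W}
    (hpres : PreservesUniqueAndAbsent c P g Q) (hP : P ⊆ A) (hQ : Q ⊆ B)
    (hAB : A \ P = B \ Q) (hcg : Set.EqOn c g (A \ P)) (h : ∃ a, IsUniqueColorOn c A a) :
    ∃ a, IsUniqueColorOn g B a := by
  obtain ⟨a, u, ⟨huA, rfl⟩, hu⟩ := h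
  have houtside : ∀ x ∈ B, x ∉ Q → g x = c u → x = u ∧ u ∉ P := by
    intro x hxB hxQ hxa
    have hx : x ∈ A \ P := hAB ▸ ⟨hxB, hxQ⟩
    obtain rfl := hu x ⟨hx.1, (hcg hx).trans hxa⟩
    exact ⟨rfl, hx.2⟩
  by_cases huP : u ∈ P
  · obtain ⟨w, ⟨hwQ, hwa⟩, hw⟩ :=
      (hpres (c u)).1 ⟨u, ⟨huP, rfl⟩, fun x hx => hu x ⟨hP hx.1, hx.2⟩⟩
    refine ⟨c u, w, ⟨hQ hwQ, hwa⟩, fun x ⟨hxB, hxa⟩ => ?_⟩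
    by_cases hxQ : x ∈ Q
    · exact hw x ⟨hxQ, hxa⟩
    · exact absurd huP (houtside x hxB hxQ hxa).2
  · have habsent := (hpres (c u)).2 fun x hxP hxa => huP (hu x ⟨hP hxP, hxa⟩ ▸ hxP)
    have hu' : u ∈ B \ Q := hAB ▸ ⟨huA, huP⟩
    refine ⟨c u, u, ⟨hu'.1, (hcg ⟨huA, huP⟩).symm⟩, fun x ⟨hxB, hxa⟩ => ?_⟩
    exact (houtside x hxB (fun hxQ => habsent x hxQ hxa) hxa).1

theorem preservesUniqueAndAbsent_of_fill {c : W → S} {P Q : Set W} (hPQ : P ⊆ Q) {x y : W}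
    (hx : x ∈ P) (hy : y ∈ P) (hxy : x ≠ y) (hcxy : c x = c y)
    (hfill : ∀ u ∈ Q \ P, c u = c x) : PreservesUniqueAndAbsent c P c Q := by
  intro a
  have hmem : a ≠ c x → ∀ u ∈ Q, c u = a → u ∈ P := fun ha u hu hua =>
    by_contra fun huP => ha (hua ▸ hfill u ⟨hu, huP⟩)
  refine ⟨fun huniq => ?_, fun habsent u hu hua => ?_⟩
  · have ha : a ≠ c x := by
      rintro rfl
      exact not_isUniqueColorOn_of_ne hx hy hxy hcxy huniq
    obtain ⟨u, hu, huniq⟩ := huniq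
    exact ⟨u, ⟨hPQ hu.1, hu.2⟩, fun v hv => huniq v ⟨hmem ha v hv.1 hv.2, hv.2⟩⟩
  · exact habsent u (hmem (fun ha => habsent x hx ha.symm) u hu hua) hua

theorem exists_preservesUniqueAndAbsent [Fintype S] (c : W → S) {T T' : Finset W}
    (hT' : T' ⊆ T) (hcard : Fintype.card S < T'.card) :
    ∃ g : W → S, (∀ u ∉ T', g u = c u) ∧ PreservesUniqueAndAbsent c T g T' := by
  classical
  obtain ⟨x, hx, y, hy, hxy, hcxy⟩ := Finset.exists_ne_map_eq_of_card_lt_of_maps_to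
    (t := Finset.univ) (by simpa using hcard.trans_le (Finset.card_le_card hT'))
    (fun z _ => Finset.mem_univ (c z))
  obtain ⟨ι⟩ : Nonempty (S ↪ T') :=
    Function.Embedding.nonempty_of_card_le (by simpa using hcard.le)
  set f : S → W := fun a => ι a
  have hf : f.Injective := Subtype.val_injective.comp ι.injective
  set r : S → S := fun a => if IsUniqueColorOn c T a then a else c x
  set g : W → S := fun u => if u ∈ T' then Function.extend f r (fun _ => c x) u else c u
  have hg : ∀ u ∈ T', ∀ a, g u = a → a = c x ∨ (IsUniqueColorOn c T a ∧ u = f a) := by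
    intro u hu a hua
    simp only [g, hu, if_true] at hua
    by_cases hrange : ∃ b, f b = u
    · obtain ⟨b, rfl⟩ := hrange
      rw [hf.extend_apply] at hua
      by_cases hb : IsUniqueColorOn c T b
      · simp only [r, hb, if_true] at hua
        exact Or.inr ⟨hua ▸ hb, hua ▸ rfl⟩
      · simp only [r, hb, if_false] at hua
        exact Or.inl hua.symm
    · rw [Function.extend_apply' _ _ _ hrange] at hua
      exact Or.inl hua.symm
  refine ⟨g, fun u hu => if_neg hu, fun a => ⟨fun huniq => ?_, fun habsent u hu hua => ?_⟩⟩
  · have ha : a ≠ c x := by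
      rintro rfl
      exact not_isUniqueColorOn_of_ne hx hy hxy hcxy huniq
    refine ⟨f a, ⟨(ι a).2, ?_⟩, fun u hu => ((hg u hu.1 a hu.2).resolve_left ha).2⟩
    simp only [g, (ι a).2, if_true, f, hf.extend_apply, r, huniq, if_true]
  · obtain ha | ⟨⟨w, hw, -⟩, -⟩ := hg u hu a hua
    · exact habsent x hx ha.symm
    · exact habsent w hw.1 hw.2

section Twins

variable [Fintype S] [DecidableEq W] {H : SimpleGraph W} {T D : Finset W}

theorem IsCFCN.exists_induce_of_twins {c : W → S} (hc : IsCFCN H c)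
    (htwin : ∀ t ∈ T, ∀ t' ∈ T, H.closedNeighborSet t = H.closedNeighborSet t')
    (hD : D ⊆ T) (hcard : Fintype.card S < (T \ D).card) :
    ∃ c' : {v | v ∉ D} → S, IsCFCN (H.induce {v | v ∉ D}) c' := by
  obtain ⟨g, hgc, hpres⟩ := exists_preservesUniqueAndAbsent c Finset.sdiff_subset hcard
  rw [Finset.coe_sdiff] at hpres
  refine ⟨fun v => g v, isCFCN_induce_iff.2 fun v _ => ?_⟩
  change ∃ a, IsUniqueColorOn g (H.closedNeighborSet v \ ↑D) a
  have hcg : Set.EqOn c g (H.closedNeighborSet v \ ↑T) := fun u hu =>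
    (hgc u fun h => hu.2 (Finset.mem_sdiff.1 h).1).symm
  rcases subset_or_disjoint_closedNeighborSet_of_twins htwin v with hsub | hdisj
  · exact hpres.exists_isUniqueColorOn hsub (Set.sdiff_subset_sdiff_left hsub)
      (sdiff_sdiff_sdiff_cancel_right (Finset.coe_subset.2 hD)).symm hcg (hc v)
  · rw [(hdisj.mono_left (Finset.coe_subset.2 hD)).symm.sdiff_eq_left]
    rw [hdisj.symm.sdiff_eq_left] at hcg
    obtain ⟨a, ha⟩ := hc v
    exact ⟨a, (isUniqueColorOn_congr hcg).1 ha⟩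

theorem IsCFCN.exists_of_induce_of_twins {c' : {v | v ∉ D} → S}
    (hc' : IsCFCN (H.induce {v | v ∉ D}) c')
    (htwin : ∀ t ∈ T, ∀ t' ∈ T, H.closedNeighborSet t = H.closedNeighborSet t')
    (hD : D ⊆ T) (hcard : Fintype.card S < (T \ D).card) : ∃ c : W → S, IsCFCN H c := by
  obtain ⟨t₀, ht₀⟩ : (T \ D).Nonempty := Finset.card_pos.1 (Nat.zero_lt_of_lt hcard)
  obtain ⟨c, rfl⟩ : ∃ c : W → S, c' = fun v : {v | v ∉ D} => c v :=
    ⟨Function.extend Subtype.val c' fun _ => c' ⟨t₀, (Finset.mem_sdiff.1 ht₀).2⟩,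
      funext fun v => (Subtype.val_injective.extend_apply _ _ v).symm⟩
  obtain ⟨x, hx, y, hy, hxy, hcxy⟩ := Finset.exists_ne_map_eq_of_card_lt_of_maps_to
    (t := Finset.univ) (by simpa using hcard) (fun z _ => Finset.mem_univ (c z))
  have hxD := (Finset.mem_sdiff.1 hx).2
  have hyD := (Finset.mem_sdiff.1 hy).2
  set c₁ : W → S := fun u => if u ∈ D then c x else c u
  have hc₁ : (fun v : {v | v ∉ D} => c₁ v) = fun v : {v | v ∉ D} => c v :=
    funext fun v => if_neg v.2
  rw [← hc₁, isCFCN_induce_iff] at hc'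
  have hpres : PreservesUniqueAndAbsent c₁ (↑T \ ↑D) c₁ ↑T := by
    rw [← Finset.coe_sdiff]
    refine preservesUniqueAndAbsent_of_fill (Finset.coe_subset.2 Finset.sdiff_subset) hx hy hxy
      (by simp only [c₁, hxD, hyD, if_false, hcxy]) fun u hu => ?_
    have huD : u ∈ D := by simpa [hu.1] using hu.2
    simp only [c₁, huD, hxD, if_true, if_false]
  refine ⟨c₁, isCFCN_iff.2 fun v => ?_⟩
  obtain ⟨v', hv'D, hv'⟩ : ∃ v' ∉ D, H.closedNeighborSet v' = H.closedNeighborSet v := by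
    by_cases hv : v ∈ D
    · exact ⟨x, hxD, htwin x (Finset.mem_sdiff.1 hx).1 v (hD hv)⟩
    · exact ⟨v, hv, rfl⟩
  have hv'served : ∃ a, IsUniqueColorOn c₁ (H.closedNeighborSet v' \ ↑D) a := hc' v' hv'D
  rw [← hv']
  rcases subset_or_disjoint_closedNeighborSet_of_twins htwin v' with hsub | hdisj
  · exact hpres.exists_isUniqueColorOn (Set.sdiff_subset_sdiff_left hsub) hsub
      (sdiff_sdiff_sdiff_cancel_right (Finset.coe_subset.2 hD)) (Set.eqOn_refl c₁ _) hv'served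
  · rwa [(hdisj.mono_left (Finset.coe_subset.2 hD)).symm.sdiff_eq_left] at hv'served

theorem exists_isCFCN_iff_induce_of_twins
    (htwin : ∀ t ∈ T, ∀ t' ∈ T, H.closedNeighborSet t = H.closedNeighborSet t')
    (hD : D ⊆ T) (hcard : Fintype.card S < (T \ D).card) :
    (∃ c : W → S, IsCFCN H c) ↔ ∃ c' : {v | v ∉ D} → S, IsCFCN (H.induce {v | v ∉ D}) c' :=
  ⟨fun ⟨_, hc⟩ => IsCFCN.exists_induce_of_twins hc htwin hD hcard,
    fun ⟨_, hc'⟩ => IsCFCN.exists_of_induce_of_twins hc' htwin hD hcard⟩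

end Twins

end

theorem cfcn_reduction_type_class_general {V : Type*} [DecidableEq V]
    (G : SimpleGraph V) [DecidableRel G.Adj] (X : Finset V)
    (C : Finset V)
    (hCclique : ∀ u ∈ C, ∀ v ∈ C, u ≠ v → G.Adj u v)
    (hCclosed : ∀ u ∈ C, ∀ v : V, v ∉ X → G.Adj u v → v ∈ C)
    (Y : Finset V) (k : ℕ)
    (T : Finset V) (hT : T = C.filter (fun u => X.filter (fun x => G.Adj u x) = Y))
    (D : Finset V) (hD : D ⊆ T) (hrest : (T \ D).card = k + 1) :
    (∃ c : V → Fin k, IsCFCN G c) ↔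
      (∃ c' : {v : V | v ∉ D} → Fin k, IsCFCN (G.induce {v : V | v ∉ D}) c') := by
  have hclosedNbhd : ∀ t ∈ T, G.closedNeighborSet t = ↑C ∪ ↑Y := by
    intro t ht
    rw [hT, Finset.mem_filter] at ht
    rw [← ht.2]
    exact G.closedNeighborSet_eq_union_filter ht.1 (hCclique t ht.1) (hCclosed t ht.1)
  refine exists_isCFCN_iff_induce_of_twins (fun t ht t' ht' => ?_) hD (by simp [hrest])
  rw [hclosedNbhd t ht, hclosedNbhd t' ht']

/-- Reduction rule for CF-CN coloring: if `G \ X` is a cluster graph, `C` is a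
connected component (a clique) of `G \ X`, `Y ⊆ X`, and the type class
`T = {u ∈ C : N(u) ∩ X = Y}` has more than `k + 1` vertices, then deleting all but
`k + 1` vertices of `T` (the deleted set is `D`) preserves CF-CN `k`-colorability. -/
theorem cfcn_reduction_type_class {V : Type*} [Fintype V] [DecidableEq V]
    (G : SimpleGraph V) [DecidableRel G.Adj] (X : Finset V)
    (hcluster : ∀ u v w : V, u ∉ X → v ∉ X → w ∉ X →
      G.Adj u v → G.Adj v w → u ≠ w → G.Adj u w)
    (C : Finset V)
    (hCX : ∀ v ∈ C, v ∉ X)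
    (hCne : C.Nonempty)
    (hCclique : ∀ u ∈ C, ∀ v ∈ C, u ≠ v → G.Adj u v)
    (hCclosed : ∀ u ∈ C, ∀ v : V, v ∉ X → G.Adj u v → v ∈ C)
    (Y : Finset V) (hY : Y ⊆ X) (k : ℕ)
    (T : Finset V) (hT : T = C.filter (fun u => X.filter (fun x => G.Adj u x) = Y))
    (hTbig : k + 1 < T.card)
    (D : Finset V) (hD : D ⊆ T) (hrest : (T \ D).card = k + 1) :
    (∃ c : V → Fin k, IsCFCN G c) ↔
      (∃ c' : {v : V | v ∉ D} → Fin k, IsCFCN (G.induce {v : V | v ∉ D}) c') :=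
  cfcn_reduction_type_class_general G X C hCclique hCclosed Y k T hT D hD hrest
end

section
/- Let G be a finite simple graph and X ⊆ V(G) with |X| = d such that G \ X is a cluster graph. Suppose C₁, …, C_{d+2} are d + 2 distinct connected components (cliques) of G \ X that pairwise have the same type vector: for every pair i, j there is a bijection φ between the vertex sets of C_i and C_j with N(u) ∩ X = N(φ(u)) ∩ X for every vertex u of C_i. Let G' be the graph obtained from G by deleting all vertices of C_{d+2}. Then G admits a conflict-free closed neighborhood coloring with k colors if and only if G' does. -/
/-!
The `d` conflict-free witnesses of the vertices of `X` meet at most `d` of the `d + 2` twin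
components, so some component `A` other than the deleted one `B` carries none of them. Exchanging
`A` and `B` along their twin bijection is an automorphism of `G`. Given a coloring of `G`, recolor
through this automorphism: the witnesses of `X` then avoid `B`, and every other vertex outside `B`
has its whole closed neighborhood outside `B`, so the coloring restricts to `G - B`. Conversely,
a coloring of `G - B` whose `X`-witnesses avoid `A` extends to `G` by copying the colors of `A`
onto `B`: every color that a vertex of `X` newly sees in `B` it already saw in `A`, away from its
witness, and `B` itself is colored like its twin `A`.
-/

open Set

section

variable {V W S : Type*}

def IsCFWitness (G : SimpleGraph V) (s : Set V) (c : V → S) (v w : V) : Prop :=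
  w ∈ s ∧ (G.Adj v w ∨ w = v) ∧ ∀ u ∈ s, (G.Adj v u ∨ u = v) → c u = c w → u = w

theorem isCFCN_iff_forall_exists_isCFWitness {G : SimpleGraph V} {c : V → S} :
    IsCFCN G c ↔ ∀ v, ∃ w, IsCFWitness G univ c v w := by
  refine forall_congr' fun v => ⟨?_, ?_⟩
  · rintro ⟨a, w, ⟨hw, rfl⟩, huniq⟩
    exact ⟨w, trivial, hw, fun u _ hu hcu => huniq u ⟨hu, hcu⟩⟩
  · rintro ⟨w, -, hw, huniq⟩
    exact ⟨c w, w, ⟨hw, rfl⟩, fun u hu => huniq u trivial hu.1 hu.2⟩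

theorem isCFWitness_induce_iff {G : SimpleGraph V} {s : Set V} {c : V → S} {v w : s} :
    IsCFWitness (G.induce s) univ (c ∘ (↑)) v w ↔ IsCFWitness G s c v w := by
  simp [IsCFWitness, Subtype.ext_iff]

namespace IsCFWitness

variable {G : SimpleGraph V} {s t : Set V} {c : V → S} {v w : V}

theorem mono (h : IsCFWitness G t c v w) (hst : s ⊆ t) (hw : w ∈ s) :
    IsCFWitness G s c v w :=
  ⟨hw, h.2.1, fun u hu => h.2.2 u (hst hu)⟩

theorem of_subset (h : IsCFWitness G s c v w) (hst : s ⊆ t)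
    (hcopy : ∀ u ∈ t, u ∉ s → G.Adj v u ∨ u = v →
      ∃ u' ∈ s, u' ≠ w ∧ (G.Adj v u' ∨ u' = v) ∧ c u' = c u) :
    IsCFWitness G t c v w := by
  refine ⟨hst h.1, h.2.1, fun u hut hu hcu => ?_⟩
  by_cases hus : u ∈ s
  · exact h.2.2 u hus hu hcu
  · obtain ⟨u', hu's, hu'w, hu', hcu'⟩ := hcopy u hut hus hu
    exact absurd (h.2.2 u' hu's hu' (hcu'.trans hcu)) hu'w

theorem comp_iso {H : SimpleGraph W} {c : W → S} (f : G ≃g H)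
    (h : IsCFWitness H univ c (f v) (f w)) : IsCFWitness G univ (c ∘ f) v w := by
  have hN : ∀ u, (H.Adj (f v) (f u) ∨ f u = f v) ↔ (G.Adj v u ∨ u = v) := fun u => by
    rw [f.map_adj_iff, f.injective.eq_iff]
  exact ⟨trivial, (hN w).1 h.2.1,
    fun u _ hu hcu => f.injective (h.2.2 (f u) trivial ((hN u).2 hu) hcu)⟩

end IsCFWitness

theorem exists_ne_forall_notMem_of_pairwise_disjoint {α β ι : Type*} [Fintype α] [Fintype ι]
    {C : ι → Finset β} (hC : Pairwise fun i j => Disjoint (C i) (C j)) (f : α → β) (i₀ : ι)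
    (hcard : Fintype.card α + 1 < Fintype.card ι) : ∃ i ≠ i₀, ∀ a, f a ∉ C i := by
  classical
  by_contra! h
  choose g hg using h
  have hlt : Fintype.card α < Fintype.card {i // i ≠ i₀} := by
    rw [Fintype.card_subtype_compl, Fintype.card_subtype_eq]
    omega
  obtain ⟨i, j, hij, hgij⟩ :=
    Fintype.exists_ne_map_eq_of_card_lt (fun i : {i // i ≠ i₀} => g i.1 i.2) hlt
  exact Finset.disjoint_left.1 (hC (Subtype.coe_injective.ne hij)) (hg i i.2) (hgij ▸ hg j j.2)

structure IsCliqueComponent (G : SimpleGraph V) (X C : Finset V) : Prop where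
  notMem : ∀ v ∈ C, v ∉ X
  isClique : G.IsClique (C : Set V)
  mem_of_adj : ∀ u ∈ C, ∀ v, v ∉ X → G.Adj u v → v ∈ C

namespace IsCliqueComponent

variable {G : SimpleGraph V} {X A B : Finset V}

theorem subset_of_mem (hA : IsCliqueComponent G X A) (hB : IsCliqueComponent G X B) {v : V}
    (hvA : v ∈ A) (hvB : v ∈ B) : A ⊆ B := by
  intro u hu
  obtain rfl | huv := eq_or_ne u v
  · exact hvB
  · exact hB.mem_of_adj v hvB u (hA.notMem u hu) (hA.isClique hvA hu huv.symm)

theorem disjoint_of_ne (hA : IsCliqueComponent G X A) (hB : IsCliqueComponent G X B)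
    (hAB : A ≠ B) : Disjoint A B :=
  Finset.disjoint_left.2 fun _ hvA hvB =>
    hAB ((hA.subset_of_mem hB hvA hvB).antisymm (hB.subset_of_mem hA hvB hvA))

theorem notMem_of_adj (hA : IsCliqueComponent G X A) {u v : V} (hvA : v ∉ A) (hvX : v ∉ X)
    (huv : G.Adj v u) : u ∉ A :=
  fun huA => hvA (hA.mem_of_adj u huA v hvX huv.symm)

end IsCliqueComponent

structure IsTwinEquiv (G : SimpleGraph V) (X : Finset V) {A B : Finset V} (φ : A ≃ B) : Prop where
  left : IsCliqueComponent G X A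
  right : IsCliqueComponent G X B
  disjoint : Disjoint A B
  adj_iff : ∀ u : A, ∀ x ∈ X, G.Adj u x ↔ G.Adj (φ u) x

section TwinSwap

variable [DecidableEq V] {A B : Finset V} (φ : A ≃ B)

def twinSwap (y : V) : V :=
  if h : y ∈ A then φ ⟨y, h⟩ else if h : y ∈ B then φ.symm ⟨y, h⟩ else y

def twinFold (y : V) : V := if y ∈ B then twinSwap φ y else y

variable {φ} {y : V}

theorem twinSwap_of_mem_left (hy : y ∈ A) : twinSwap φ y = φ ⟨y, hy⟩ := dif_pos hy

theorem twinSwap_of_mem_right (hAB : Disjoint A B) (hy : y ∈ B) :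
    twinSwap φ y = φ.symm ⟨y, hy⟩ := by
  rw [twinSwap, dif_neg (Finset.disjoint_right.1 hAB hy), dif_pos hy]

theorem twinSwap_of_notMem (hA : y ∉ A) (hB : y ∉ B) : twinSwap φ y = y := by
  rw [twinSwap, dif_neg hA, dif_neg hB]

theorem twinSwap_mem_right (hy : y ∈ A) : twinSwap φ y ∈ B := by
  rw [twinSwap_of_mem_left hy]; exact (φ _).2

theorem twinSwap_mem_left (hAB : Disjoint A B) (hy : y ∈ B) : twinSwap φ y ∈ A := by
  rw [twinSwap_of_mem_right hAB hy]; exact (φ.symm _).2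

theorem twinSwap_involutive (hAB : Disjoint A B) : Function.Involutive (twinSwap φ) := by
  intro y
  by_cases hA : y ∈ A
  · rw [twinSwap_of_mem_right hAB (twinSwap_mem_right hA)]
    simp [twinSwap_of_mem_left hA]
  by_cases hB : y ∈ B
  · rw [twinSwap_of_mem_left (twinSwap_mem_left hAB hB)]
    simp [twinSwap_of_mem_right hAB hB]
  · rw [twinSwap_of_notMem hA hB, twinSwap_of_notMem hA hB]

theorem twinFold_of_notMem (hy : y ∉ B) : twinFold φ y = y := if_neg hy

theorem twinFold_notMem (hAB : Disjoint A B) (y : V) : twinFold φ y ∉ B := by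
  unfold twinFold
  split_ifs with hy
  · exact Finset.disjoint_left.1 hAB (twinSwap_mem_left hAB hy)
  · exact hy

theorem twinFold_twinSwap (hAB : Disjoint A B) (y : V) :
    twinFold φ (twinSwap φ y) = twinFold φ y := by
  by_cases hB : y ∈ B
  · rw [twinFold_of_notMem (Finset.disjoint_left.1 hAB (twinSwap_mem_left hAB hB)), twinFold,
      if_pos hB]
  by_cases hA : y ∈ A
  · rw [twinFold, if_pos (twinSwap_mem_right hA), twinSwap_involutive hAB, twinFold_of_notMem hB]
  · rw [twinSwap_of_notMem hA hB]

end TwinSwap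

namespace IsTwinEquiv

variable [DecidableEq V] {G : SimpleGraph V} {X A B : Finset V} {φ : A ≃ B} {u v x : V}

theorem twinSwap_of_mem (h : IsTwinEquiv G X φ) (hx : x ∈ X) : twinSwap φ x = x :=
  twinSwap_of_notMem (fun hA => h.left.notMem x hA hx) (fun hB => h.right.notMem x hB hx)

theorem adj_twinSwap_iff_of_mem (h : IsTwinEquiv G X φ) (hx : x ∈ X) :
    G.Adj (twinSwap φ u) x ↔ G.Adj u x := by
  by_cases hA : u ∈ A
  · rw [twinSwap_of_mem_left hA]
    exact (h.adj_iff ⟨u, hA⟩ x hx).symm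
  by_cases hB : u ∈ B
  · rw [twinSwap_of_mem_right h.disjoint hB, h.adj_iff _ x hx, Equiv.apply_symm_apply]
  · rw [twinSwap_of_notMem hA hB]

theorem adj_twinSwap (h : IsTwinEquiv G X φ) (huv : G.Adj u v) :
    G.Adj (twinSwap φ u) (twinSwap φ v) := by
  by_cases hvX : v ∈ X
  · rw [h.twinSwap_of_mem hvX]
    exact (h.adj_twinSwap_iff_of_mem hvX).2 huv
  by_cases huX : u ∈ X
  · rw [h.twinSwap_of_mem huX]
    exact ((h.adj_twinSwap_iff_of_mem huX).2 huv.symm).symm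
  have hsame : ∀ {C}, IsCliqueComponent G X C → (u ∈ C ↔ v ∈ C) := fun hC =>
    ⟨fun hu => hC.mem_of_adj u hu v hvX huv, fun hv => hC.mem_of_adj v hv u huX huv.symm⟩
  have hne : twinSwap φ u ≠ twinSwap φ v :=
    (twinSwap_involutive h.disjoint).injective.ne huv.ne
  by_cases huA : u ∈ A
  · exact h.right.isClique (twinSwap_mem_right huA)
      (twinSwap_mem_right ((hsame h.left).1 huA)) hne
  by_cases huB : u ∈ B
  · exact h.left.isClique (twinSwap_mem_left h.disjoint huB)
      (twinSwap_mem_left h.disjoint ((hsame h.right).1 huB)) hne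
  · rwa [twinSwap_of_notMem huA huB,
      twinSwap_of_notMem (mt (hsame h.left).2 huA) (mt (hsame h.right).2 huB)]

def swapIso (h : IsTwinEquiv G X φ) : G ≃g G where
  toEquiv := (twinSwap_involutive h.disjoint).toPerm _
  map_rel_iff' {u v} := ⟨fun huv => by
    simpa only [Function.Involutive.coe_toPerm, twinSwap_involutive h.disjoint _] using
      h.adj_twinSwap huv, h.adj_twinSwap⟩

theorem isCFWitness_comp_twinSwap (h : IsTwinEquiv G X φ) {c : V → S} {w : V}
    (hw : IsCFWitness G univ c v w) :
    IsCFWitness G univ (c ∘ twinSwap φ) (twinSwap φ v) (twinSwap φ w) := by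
  refine IsCFWitness.comp_iso h.swapIso ?_
  show IsCFWitness G univ c (twinSwap φ (twinSwap φ v)) (twinSwap φ (twinSwap φ w))
  rwa [twinSwap_involutive h.disjoint, twinSwap_involutive h.disjoint]

theorem isCFCN_induce_comp_twinSwap (h : IsTwinEquiv G X φ) {c : V → S} (hc : IsCFCN G c)
    (hX : ∀ x ∈ X, ∃ w ∉ A, IsCFWitness G univ c x w) :
    IsCFCN (G.induce {v | v ∉ B}) ((c ∘ twinSwap φ) ∘ (↑)) := by
  refine isCFCN_iff_forall_exists_isCFWitness.2 fun v => ?_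
  obtain ⟨w, hwA, hw⟩ : ∃ w, ((v : V) ∈ X → w ∉ A) ∧ IsCFWitness G univ c (twinSwap φ v) w := by
    by_cases hvX : (v : V) ∈ X
    · obtain ⟨w, hwA, hw⟩ := hX v hvX
      exact ⟨w, fun _ => hwA, by rwa [h.twinSwap_of_mem hvX]⟩
    · obtain ⟨w, hw⟩ := isCFCN_iff_forall_exists_isCFWitness.1 hc (twinSwap φ v)
      exact ⟨w, (absurd · hvX), hw⟩
  have hσw := h.isCFWitness_comp_twinSwap hw
  rw [twinSwap_involutive h.disjoint] at hσw
  have hσwB : twinSwap φ w ∉ B := by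
    by_cases hvX : (v : V) ∈ X
    · intro hB
      exact hwA hvX (twinSwap_involutive h.disjoint w ▸ twinSwap_mem_left h.disjoint hB)
    · rcases hσw.2.1 with hadj | heq
      · exact h.right.notMem_of_adj v.2 hvX hadj
      · exact heq ▸ v.2
  exact ⟨⟨_, hσwB⟩, isCFWitness_induce_iff.2 (hσw.mono (subset_univ _) hσwB)⟩

theorem isCFCN_of_isCFCN_induce (h : IsTwinEquiv G X φ) {c : V → S}
    (hinv : ∀ v, c (twinSwap φ v) = c v) (hc : IsCFCN (G.induce {v | v ∉ B}) (c ∘ (↑)))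
    (hX : ∀ x : {v | v ∉ B}, ↑x ∈ X → ∃ w : {v | v ∉ B}, ↑w ∉ A ∧
      IsCFWitness (G.induce {v | v ∉ B}) univ (c ∘ (↑)) x w) :
    IsCFCN G c := by
  have hout : ∀ v, v ∉ B → ∃ w, IsCFWitness G univ c v w := by
    intro v hvB
    by_cases hvX : v ∈ X
    · obtain ⟨w, hwA, hw⟩ := hX ⟨v, hvB⟩ hvX
      -- each neighbour `u ∈ B` of `v` is matched by its twin `twinSwap φ u ∈ A`, of the same colour
      refine ⟨w, (isCFWitness_induce_iff.1 hw).of_subset (subset_univ _) fun u _ huB hu => ?_⟩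
      have hσuA := twinSwap_mem_left (φ := φ) h.disjoint (not_not.1 huB)
      have hadj : G.Adj v u := hu.resolve_right fun huv => huB (huv ▸ hvB)
      refine ⟨twinSwap φ u, Finset.disjoint_left.1 h.disjoint hσuA,
        fun heq => hwA (heq ▸ hσuA), Or.inl ?_, hinv u⟩
      simpa only [h.twinSwap_of_mem hvX] using h.adj_twinSwap hadj
    · obtain ⟨w, hw⟩ := isCFCN_iff_forall_exists_isCFWitness.1 hc ⟨v, hvB⟩
      refine ⟨w, (isCFWitness_induce_iff.1 hw).of_subset (subset_univ _) fun u _ huB hu => ?_⟩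
      rcases hu with hadj | rfl
      · exact absurd (h.right.notMem_of_adj hvB hvX hadj) huB
      · exact absurd hvB huB
  refine isCFCN_iff_forall_exists_isCFWitness.2 fun v => ?_
  by_cases hvB : v ∈ B
  · obtain ⟨w, hw⟩ :=
      hout _ (Finset.disjoint_left.1 h.disjoint (twinSwap_mem_left h.disjoint hvB))
    have hσw := h.isCFWitness_comp_twinSwap hw
    rw [twinSwap_involutive h.disjoint, show c ∘ twinSwap φ = c from funext hinv] at hσw
    exact ⟨_, hσw⟩
  · exact hout v hvB

theorem exists_isCFCN_of_isCFCN_induce (h : IsTwinEquiv G X φ) {c' : {v | v ∉ B} → S}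
    (hc' : IsCFCN (G.induce {v | v ∉ B}) c')
    (hX : ∀ x : {v | v ∉ B}, ↑x ∈ X → ∃ w : {v | v ∉ B}, ↑w ∉ A ∧
      IsCFWitness (G.induce {v | v ∉ B}) univ c' x w) :
    ∃ c : V → S, IsCFCN G c := by
  let c : V → S := fun y => c' ⟨twinFold φ y, twinFold_notMem h.disjoint y⟩
  have hc : c ∘ (↑) = c' := funext fun x => congrArg c' (Subtype.ext (twinFold_of_notMem x.2))
  have hinv : ∀ v, c (twinSwap φ v) = c v := fun v =>
    congrArg c' (Subtype.ext (twinFold_twinSwap h.disjoint v))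
  exact ⟨c, h.isCFCN_of_isCFCN_induce hinv (hc ▸ hc') (hc ▸ hX)⟩

end IsTwinEquiv

end

theorem cfcn_reduction_mega_type_general {V : Type*} [DecidableEq V]
    (G : SimpleGraph V) [DecidableRel G.Adj] (X : Finset V) (d : ℕ) (hX : X.card = d)
    (Cs : Fin (d + 2) → Finset V)
    (hCX : ∀ i, ∀ v ∈ Cs i, v ∉ X)
    (hCclique : ∀ i, ∀ u ∈ Cs i, ∀ v ∈ Cs i, u ≠ v → G.Adj u v)
    (hCclosed : ∀ i, ∀ u ∈ Cs i, ∀ v : V, v ∉ X → G.Adj u v → v ∈ Cs i)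
    (hdistinct : ∀ i j : Fin (d + 2), i ≠ j → Cs i ≠ Cs j)
    (hsametype : ∀ i j : Fin (d + 2),
      ∃ φ : {v : V // v ∈ Cs i} ≃ {v : V // v ∈ Cs j},
        ∀ u : {v : V // v ∈ Cs i},
          X.filter (fun x => G.Adj u.1 x) = X.filter (fun x => G.Adj (φ u).1 x))
    (k : ℕ) :
    (∃ c : V → Fin k, IsCFCN G c) ↔
      (∃ c' : {v : V | v ∉ Cs (Fin.last (d + 1))} → Fin k,
        IsCFCN (G.induce {v : V | v ∉ Cs (Fin.last (d + 1))}) c') := by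
  have hcomp i : IsCliqueComponent G X (Cs i) := ⟨hCX i, hCclique i, hCclosed i⟩
  have hdisj : Pairwise fun i j => Disjoint (Cs i) (Cs j) := fun i j hij =>
    (hcomp i).disjoint_of_ne (hcomp j) (hdistinct i j hij)
  have htwin i j (hij : i ≠ j) : ∃ φ : Cs i ≃ Cs j, IsTwinEquiv G X φ := by
    obtain ⟨φ, hφ⟩ := hsametype i j
    refine ⟨φ, hcomp i, hcomp j, hdisj hij, fun u x hx => ?_⟩
    simpa [hx] using Finset.ext_iff.1 (hφ u) x
  have hcard : Fintype.card X + 1 < Fintype.card (Fin (d + 2)) := by simp [hX]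
  constructor
  · rintro ⟨c, hc⟩
    choose W hW using isCFCN_iff_forall_exists_isCFWitness.1 hc
    obtain ⟨a, haL, ha⟩ := exists_ne_forall_notMem_of_pairwise_disjoint hdisj
      (fun x : X => W x) (Fin.last (d + 1)) hcard
    obtain ⟨φ, hφ⟩ := htwin a _ haL
    exact ⟨_, hφ.isCFCN_induce_comp_twinSwap hc fun x hx => ⟨W x, ha ⟨x, hx⟩, hW x⟩⟩
  · rintro ⟨c', hc'⟩
    choose W hW using isCFCN_iff_forall_exists_isCFWitness.1 hc'
    have hXs (x : X) : (x : V) ∉ Cs (Fin.last (d + 1)) := fun hx => hCX _ x hx x.2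
    obtain ⟨a, haL, ha⟩ := exists_ne_forall_notMem_of_pairwise_disjoint hdisj
      (fun x : X => (W ⟨x, hXs x⟩ : V)) (Fin.last (d + 1)) hcard
    obtain ⟨φ, hφ⟩ := htwin a _ haL
    exact hφ.exists_isCFCN_of_isCFCN_induce hc' fun x hx => ⟨W x, ha ⟨x, hx⟩, hW x⟩

/-- Reduction rule for CF-CN coloring: if `G \ X` is a cluster graph (with `|X| = d`)
and `C₁, …, C_{d+2}` are `d + 2` distinct connected components (cliques) of `G \ X`
that pairwise have the same type vector (there is a bijection between their vertex
sets preserving the neighborhood inside `X`), then deleting all vertices of the last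
component `C_{d+2}` preserves CF-CN `k`-colorability. -/
theorem cfcn_reduction_mega_type {V : Type*} [Fintype V] [DecidableEq V]
    (G : SimpleGraph V) [DecidableRel G.Adj] (X : Finset V) (d : ℕ) (hX : X.card = d)
    (hcluster : ∀ u v w : V, u ∉ X → v ∉ X → w ∉ X →
      G.Adj u v → G.Adj v w → u ≠ w → G.Adj u w)
    (Cs : Fin (d + 2) → Finset V)
    (hCX : ∀ i, ∀ v ∈ Cs i, v ∉ X)
    (hCne : ∀ i, (Cs i).Nonempty)
    (hCclique : ∀ i, ∀ u ∈ Cs i, ∀ v ∈ Cs i, u ≠ v → G.Adj u v)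
    (hCclosed : ∀ i, ∀ u ∈ Cs i, ∀ v : V, v ∉ X → G.Adj u v → v ∈ Cs i)
    (hdistinct : ∀ i j : Fin (d + 2), i ≠ j → Cs i ≠ Cs j)
    (hsametype : ∀ i j : Fin (d + 2),
      ∃ φ : {v : V // v ∈ Cs i} ≃ {v : V // v ∈ Cs j},
        ∀ u : {v : V // v ∈ Cs i},
          X.filter (fun x => G.Adj u.1 x) = X.filter (fun x => G.Adj (φ u).1 x))
    (k : ℕ) :
    (∃ c : V → Fin k, IsCFCN G c) ↔
      (∃ c' : {v : V | v ∉ Cs (Fin.last (d + 1))} → Fin k,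
        IsCFCN (G.induce {v : V | v ∉ Cs (Fin.last (d + 1))}) c') :=
  cfcn_reduction_mega_type_general G X d hX Cs hCX hCclique hCclosed hdistinct hsametype k
end

section
/- Let G be a finite simple graph, X ⊆ V(G) with G \ X a cluster graph, let C be a connected component (a clique) of G \ X, let Y ⊆ X, and let T = {u ∈ C : N(u) ∩ X = Y}. Suppose |T| > 2k + 1 and let G' be the graph obtained from G by deleting all but 2k + 1 of the vertices of T. Then G admits a conflict-free open neighborhood coloring with k colors if and only if G' does. -/
/-- A coloring `c` is a conflict-free open neighborhood (CF-ON) coloring of `H` if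
for every vertex `v` there is some color assigned to exactly one vertex of the
open neighborhood `N(v)`. -/
def IsCFON {W S : Type*} (H : SimpleGraph W) (c : W → S) : Prop :=
  ∀ v : W, ∃ a : S, ∃! u : W, H.Adj v u ∧ c u = a

/-!
The vertices of `T` are pairwise adjacent true twins, so a vertex outside `T` sees all of `T` or
none of it, and a vertex of `T` sees the rest of `T` and the same vertices outside `T` as every
other vertex of `T`. Hence whether a colour occurs exactly once in a neighbourhood depends on the
colouring of `T` only through the sizes of its colour classes (and, for a vertex of `T`, through
its own colour), and only classes of size at most two matter. Given a colouring of `G`, recolour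
the `2k + 1` survivors like a subset of `T` that contains every colour class of size at most two
(together at most `2k` vertices). Given a colouring of `G'`, some colour occurs at least three
times among the `2k + 1` survivors; give it to the deleted vertices.
-/

open Finset

lemma Finset.card_filter_inter_add_card_filter_sdiff {α : Type*} [DecidableEq α]
    (s t : Finset α) (p : α → Prop) [DecidablePred p] :
    #{x ∈ s ∩ t | p x} + #{x ∈ s \ t | p x} = #{x ∈ s | p x} := by
  rw [← card_inter_add_card_sdiff (s.filter p) t]
  congr 2 <;> ext <;> simp <;> tauto

lemma Finset.card_filter_card_fiber_le {α β : Type*} [DecidableEq β] [Fintype β] (s : Finset α)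
    (f : α → β) (m : ℕ) : #{x ∈ s | #{y ∈ s | f y = f x} ≤ m} ≤ m * Fintype.card β :=
  calc #{x ∈ s | #{y ∈ s | f y = f x} ≤ m}
      ≤ m * #({x ∈ s | #{y ∈ s | f y = f x} ≤ m}.image f) := by
        refine card_le_mul_card_image _ m fun b hb => ?_
        obtain ⟨x, hx, rfl⟩ := mem_image.1 hb
        exact (card_le_card (filter_subset_filter _ (filter_subset _ _))).trans (mem_filter.1 hx).2
    _ ≤ m * Fintype.card β := Nat.mul_le_mul_left _ (card_le_univ _)

lemma existsUnique_subtype_iff {α : Type*} {p q : α → Prop} :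
    (∃! u : {v // p v}, q u) ↔ ∃! u, p u ∧ q u := by
  constructor
  · rintro ⟨⟨u, hu⟩, hq, huniq⟩
    exact ⟨u, ⟨hu, hq⟩, fun w ⟨hw, hqw⟩ => congrArg Subtype.val (huniq ⟨w, hw⟩ hqw)⟩
  · rintro ⟨u, ⟨hu, hq⟩, huniq⟩
    exact ⟨⟨u, hu⟩, hq, fun w hw => Subtype.ext (huniq w ⟨w.2, hw⟩)⟩

namespace SimpleGraph

variable {V S : Type*} [DecidableEq S]

/-- `c` restricted to `W` is a CF-ON colouring of the induced subgraph `G[W]`. -/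
def IsCFONOn (G : SimpleGraph V) [DecidableRel G.Adj] (W : Finset V) (c : V → S) : Prop :=
  ∀ v ∈ W, ∃ a, #{u ∈ W | G.Adj v u ∧ c u = a} = 1

section Restriction

variable [Fintype V] (G : SimpleGraph V) [DecidableRel G.Adj]

lemma exists_isCFON_iff : (∃ c : V → S, IsCFON G c) ↔ ∃ c : V → S, G.IsCFONOn univ c := by
  simp [IsCFON, IsCFONOn, card_eq_one_iff_existsUnique]

lemma isCFON_induce_compl_iff [DecidableEq V] (D : Finset V) (c : V → S) :
    IsCFON (G.induce {v : V | v ∉ D}) (fun u => c u) ↔ G.IsCFONOn (univ \ D) c := by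
  simp only [IsCFON, IsCFONOn, card_eq_one_iff_existsUnique, mem_filter, mem_sdiff, mem_univ,
    true_and, Subtype.forall, Set.mem_ofPred_eq, comap_adj, Function.Embedding.coe_subtype]
  exact forall₂_congr fun v _ => exists_congr fun a =>
    existsUnique_subtype_iff (p := (· ∉ D)) (q := fun u => G.Adj v u ∧ c u = a)

lemma exists_isCFON_induce_compl_iff [DecidableEq V] {D : Finset V} {v₀ : V}
    (hv₀ : v₀ ∉ D) :
    (∃ c : {v : V | v ∉ D} → S, IsCFON (G.induce {v : V | v ∉ D}) c) ↔
      ∃ c : V → S, G.IsCFONOn (univ \ D) c := by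
  constructor
  · rintro ⟨c, hc⟩
    refine ⟨fun v => if hv : v ∉ D then c ⟨v, hv⟩ else c ⟨v₀, hv₀⟩,
      (isCFON_induce_compl_iff G D _).1 ?_⟩
    convert hc using 1
    exact funext fun u => dif_pos u.2
  · rintro ⟨c, hc⟩
    exact ⟨_, (isCFON_induce_compl_iff G D c).2 hc⟩

end Restriction

variable {G : SimpleGraph V}

lemma IsClique.card_filter_adj_add_ite [DecidableRel G.Adj] [DecidableEq V] {s : Finset V}
    (hs : G.IsClique (s : Set V)) {v : V} (hv : v ∈ s) (c : V → S) (b : S) :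
    #{u ∈ s | G.Adj v u ∧ c u = b} + (if c v = b then 1 else 0) = #{u ∈ s | c u = b} := by
  have herase : {u ∈ s | G.Adj v u ∧ c u = b} = {u ∈ s | c u = b}.erase v := by
    ext u
    simp only [mem_filter, mem_erase]
    exact ⟨fun ⟨hu, huv, hcu⟩ => ⟨huv.ne', hu, hcu⟩,
      fun ⟨hne, hu, hcu⟩ => ⟨hu, hs hv hu hne.symm, hcu⟩⟩
  rw [herase]
  split_ifs with hcv
  · exact card_erase_add_one (mem_filter.2 ⟨hv, hcv⟩)
  · rw [add_zero, erase_eq_of_notMem (by simp [hcv])]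

def IsTwinClique (G : SimpleGraph V) (T : Finset V) : Prop :=
  G.IsClique (T : Set V) ∧ ∀ u ∈ T, ∀ u' ∈ T, ∀ w ∉ T, G.Adj u w → G.Adj u' w

variable {T : Finset V}

lemma IsTwinClique.adj_iff (hT : G.IsTwinClique T) {u u' w : V} (hu : u ∈ T) (hu' : u' ∈ T)
    (hw : w ∉ T) : G.Adj u w ↔ G.Adj u' w :=
  ⟨hT.2 u hu u' hu' w hw, hT.2 u' hu' u hu w hw⟩

lemma IsTwinClique.adj_of_adj (hT : G.IsTwinClique T) {v t u : V} (hv : v ∉ T) (ht : t ∈ T)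
    (hvt : G.Adj v t) (hu : u ∈ T) : G.Adj v u :=
  (hT.2 t ht u hu v hv hvt.symm).symm

section Transfer

variable [DecidableRel G.Adj] [DecidableEq V] {W₁ W₂ : Finset V} {c₁ c₂ : V → S}

lemma IsCFONOn.of_forall_exists_card_eq (T : Finset V) (h : G.IsCFONOn W₁ c₁)
    (hmatch : ∀ v ∈ W₂, ∃ v₁ ∈ W₁, ∀ b,
      #{u ∈ W₁ \ T | G.Adj v₁ u ∧ c₁ u = b} =
        #{u ∈ W₂ \ T | G.Adj v u ∧ c₂ u = b} ∧
      (#{u ∈ W₁ ∩ T | G.Adj v₁ u ∧ c₁ u = b} ≤ 1 →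
        #{u ∈ W₂ ∩ T | G.Adj v u ∧ c₂ u = b} =
          #{u ∈ W₁ ∩ T | G.Adj v₁ u ∧ c₁ u = b})) :
    G.IsCFONOn W₂ c₂ := by
  intro v hv
  obtain ⟨v₁, hv₁, hcount⟩ := hmatch v hv
  obtain ⟨b, hb⟩ := h v₁ hv₁
  obtain ⟨hout, hin⟩ := hcount b
  refine ⟨b, ?_⟩
  rw [← card_filter_inter_add_card_filter_sdiff _ T] at hb ⊢
  have := hin (by omega)
  omega

theorem IsTwinClique.isCFONOn (hT : G.IsTwinClique T) (h : G.IsCFONOn W₁ c₁)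
    (hW : W₁ \ T = W₂ \ T) (hc : ∀ v ∉ T, c₁ v = c₂ v)
    (hcount : ∀ b, #{u ∈ W₁ ∩ T | c₁ u = b} ≤ 2 →
      #{u ∈ W₂ ∩ T | c₂ u = b} = #{u ∈ W₁ ∩ T | c₁ u = b})
    (hcolor : ∀ v ∈ W₂ ∩ T, ∃ u ∈ W₁ ∩ T, c₁ u = c₂ v) :
    G.IsCFONOn W₂ c₂ := by
  refine h.of_forall_exists_card_eq T fun v hv => ?_
  by_cases hvT : v ∈ T
  · obtain ⟨u, hu, hcu⟩ := hcolor v (mem_inter.2 ⟨hv, hvT⟩)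
    have huT := (mem_inter.1 hu).2
    refine ⟨u, (mem_inter.1 hu).1, fun b => ⟨?_, fun hb => ?_⟩⟩
    · rw [hW]
      congr 1
      refine filter_congr fun w hw => ?_
      rw [hc w (mem_sdiff.1 hw).2, hT.adj_iff huT hvT (mem_sdiff.1 hw).2]
    · have h₁ := (hT.1.subset inter_subset_right).card_filter_adj_add_ite hu c₁ b
      have h₂ := (hT.1.subset inter_subset_right).card_filter_adj_add_ite
        (mem_inter.2 ⟨hv, hvT⟩) c₂ b
      rw [hcu] at h₁
      have := hcount b (by split_ifs at h₁ <;> omega)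
      split_ifs at h₁ h₂ <;> omega
  · refine ⟨v, ?_, fun b => ⟨?_, fun hb => ?_⟩⟩
    · have : v ∈ W₁ \ T := hW ▸ mem_sdiff.2 ⟨hv, hvT⟩
      exact (mem_sdiff.1 this).1
    · rw [hW]
      congr 1
      exact filter_congr fun w hw => by rw [hc w (mem_sdiff.1 hw).2]
    · by_cases hadj : ∃ t ∈ T, G.Adj v t
      · obtain ⟨t, ht, hvt⟩ := hadj
        have hall : ∀ (W : Finset V) (c : V → S),
            {u ∈ W ∩ T | G.Adj v u ∧ c u = b} = {u ∈ W ∩ T | c u = b} := fun W c =>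
          filter_congr fun u hu => and_iff_right (hT.adj_of_adj hvT ht hvt (mem_inter.1 hu).2)
        simp only [hall] at hb ⊢
        exact hcount b (by omega)
      · push Not at hadj
        have hnone : ∀ (W : Finset V) (c : V → S),
            {u ∈ W ∩ T | G.Adj v u ∧ c u = b} = ∅ := fun W c =>
          filter_eq_empty_iff.2 fun u hu h => hadj u (mem_inter.1 hu).2 h.1
        rw [hnone, hnone]

end Transfer

lemma isTwinClique_filter [DecidableRel G.Adj] [DecidableEq V] {C X Y : Finset V}
    (hCclique : ∀ u ∈ C, ∀ v ∈ C, u ≠ v → G.Adj u v)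
    (hCclosed : ∀ u ∈ C, ∀ v : V, v ∉ X → G.Adj u v → v ∈ C) :
    G.IsTwinClique (C.filter fun u => X.filter (fun x => G.Adj u x) = Y) := by
  refine ⟨fun u hu v hv huv => hCclique u (mem_filter.1 hu).1 v (mem_filter.1 hv).1 huv,
    fun u hu u' hu' w hw huw => ?_⟩
  obtain ⟨huC, huY⟩ := mem_filter.1 hu
  obtain ⟨hu'C, hu'Y⟩ := mem_filter.1 hu'
  by_cases hwX : w ∈ X
  · have : w ∈ X.filter (G.Adj u' ·) := hu'Y ▸ huY ▸ mem_filter.2 ⟨hwX, huw⟩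
    exact (mem_filter.1 this).2
  · exact hCclique u' hu'C w (hCclosed u huC w hwX huw) (by rintro rfl; exact hw hu')

section Reduction

variable [Fintype V] [Fintype S] [DecidableRel G.Adj] [DecidableEq V] {T D : Finset V}

theorem IsTwinClique.exists_isCFONOn_sdiff (hT : G.IsTwinClique T) (hD : D ⊆ T)
    (hcard : 2 * Fintype.card S ≤ #(T \ D)) {c : V → S}
    (h : G.IsCFONOn univ c) : ∃ c' : V → S, G.IsCFONOn (univ \ D) c' := by
  set small := {u ∈ T | #{w ∈ T | c w = c u} ≤ 2}
  obtain ⟨K, hsK, hKT, hK⟩ := exists_subsuperset_card_eq (filter_subset _ T : small ⊆ T)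
    ((card_filter_card_fiber_le T c 2).trans hcard) (card_le_card sdiff_subset)
  obtain ⟨σ, hσ⟩ := Equiv.Perm.exists_map_finset_eq (T \ D) K hK.symm
  have hσK : ∀ v ∈ T \ D, σ v ∈ K := fun v hv => hσ ▸ mem_map_of_mem _ hv
  have hinter : (univ \ D) ∩ T = T \ D := by ext; simp [and_comm]
  refine ⟨fun v => if v ∈ T \ D then c (σ v) else c v, hT.isCFONOn h ?_ ?_ ?_ ?_⟩
  · rw [sdiff_sdiff_left, sup_eq_right.2 hD]
  · intro v hv
    rw [if_neg fun h => hv (mem_sdiff.1 h).1]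
  · intro b hb
    rw [univ_inter] at hb ⊢
    calc #{u ∈ (univ \ D) ∩ T | (if u ∈ T \ D then c (σ u) else c u) = b}
        = #{u ∈ T \ D | c (σ u) = b} := by
          rw [hinter]
          exact congrArg card (filter_congr fun u hu => by rw [if_pos hu])
      _ = #{u ∈ K | c u = b} := by rw [← hσ, filter_map, card_map]; rfl
      _ = #{u ∈ T | c u = b} := by
          refine congrArg card (Subset.antisymm (filter_subset_filter _ hKT) fun u hu => ?_)
          obtain ⟨huT, hcu⟩ := mem_filter.1 hu
          exact mem_filter.2 ⟨hsK (mem_filter.2 ⟨huT, hcu ▸ hb⟩), hcu⟩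
  · intro v hv
    have hv' : v ∈ T \ D := hinter ▸ hv
    exact ⟨σ v, mem_inter.2 ⟨mem_univ _, hKT (hσK v hv')⟩, (if_pos hv').symm⟩

theorem IsTwinClique.exists_isCFONOn_univ (hT : G.IsTwinClique T) (hD : D ⊆ T)
    (hcard : 2 * Fintype.card S < #(T \ D)) {c : V → S}
    (h : G.IsCFONOn (univ \ D) c) : ∃ c' : V → S, G.IsCFONOn univ c' := by
  obtain ⟨a, -, ha⟩ := exists_lt_card_fiber_of_mul_lt_card_of_maps_to
    (fun u _ => mem_univ (c u)) (t := univ) (n := 2) (by rwa [card_univ, mul_comm])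
  obtain ⟨t, ht⟩ : {u ∈ T \ D | c u = a}.Nonempty := card_pos.1 (by omega)
  have hinter : (univ \ D) ∩ T = T \ D := by ext; simp [and_comm]
  refine ⟨fun v => if v ∈ D then a else c v, hT.isCFONOn h ?_ ?_ ?_ ?_⟩
  · rw [sdiff_sdiff_left, sup_eq_right.2 hD]
  · intro v hv
    rw [if_neg fun h => hv (hD h)]
  · intro b hb
    rw [hinter] at hb ⊢
    rw [univ_inter]
    have hba : a ≠ b := by rintro rfl; omega
    refine congrArg card (ext fun u => ?_)
    by_cases huD : u ∈ D <;> simp [huD, hba]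
  · intro v hv
    by_cases hvD : v ∈ D
    · exact ⟨t, hinter ▸ mem_of_mem_filter t ht, (mem_filter.1 ht).2.trans (if_pos hvD).symm⟩
    · exact ⟨v, mem_inter.2 ⟨mem_sdiff.2 ⟨mem_univ _, hvD⟩, (mem_inter.1 hv).2⟩,
        (if_neg hvD).symm⟩

end Reduction

end SimpleGraph

theorem cfon_reduction_type_class_general {V : Type*} [Fintype V] [DecidableEq V]
    (G : SimpleGraph V) [DecidableRel G.Adj] (X : Finset V)
    (C : Finset V)
    (hCclique : ∀ u ∈ C, ∀ v ∈ C, u ≠ v → G.Adj u v)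
    (hCclosed : ∀ u ∈ C, ∀ v : V, v ∉ X → G.Adj u v → v ∈ C)
    (Y : Finset V) (k : ℕ)
    (T : Finset V) (hT : T = C.filter (fun u => X.filter (fun x => G.Adj u x) = Y))
    (D : Finset V) (hD : D ⊆ T) (hrest : (T \ D).card = 2 * k + 1) :
    (∃ c : V → Fin k, IsCFON G c) ↔
      (∃ c' : {v : V | v ∉ D} → Fin k, IsCFON (G.induce {v : V | v ∉ D}) c') := by
  have hTwin : G.IsTwinClique T := hT ▸ G.isTwinClique_filter hCclique hCclosed
  have hcard : 2 * Fintype.card (Fin k) < #(T \ D) := by rw [Fintype.card_fin, hrest]; omega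
  obtain ⟨v₀, hv₀⟩ := card_pos.1 (Nat.zero_lt_of_lt hcard)
  rw [G.exists_isCFON_iff, G.exists_isCFON_induce_compl_iff (mem_sdiff.1 hv₀).2]
  exact ⟨fun ⟨_, hc⟩ => hTwin.exists_isCFONOn_sdiff hD hcard.le hc,
    fun ⟨_, hc⟩ => hTwin.exists_isCFONOn_univ hD hcard hc⟩

/-- Reduction rule for CF-ON coloring: if `G \ X` is a cluster graph, `C` is a
connected component (a clique) of `G \ X`, `Y ⊆ X`, and the type class
`T = {u ∈ C : N(u) ∩ X = Y}` has more than `2k + 1` vertices, then deleting all but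
`2k + 1` vertices of `T` (the deleted set is `D`) preserves CF-ON `k`-colorability. -/
theorem cfon_reduction_type_class {V : Type*} [Fintype V] [DecidableEq V]
    (G : SimpleGraph V) [DecidableRel G.Adj] (X : Finset V)
    (hcluster : ∀ u v w : V, u ∉ X → v ∉ X → w ∉ X →
      G.Adj u v → G.Adj v w → u ≠ w → G.Adj u w)
    (C : Finset V)
    (hCX : ∀ v ∈ C, v ∉ X)
    (hCne : C.Nonempty)
    (hCclique : ∀ u ∈ C, ∀ v ∈ C, u ≠ v → G.Adj u v)
    (hCclosed : ∀ u ∈ C, ∀ v : V, v ∉ X → G.Adj u v → v ∈ C)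
    (Y : Finset V) (hY : Y ⊆ X) (k : ℕ)
    (T : Finset V) (hT : T = C.filter (fun u => X.filter (fun x => G.Adj u x) = Y))
    (hTbig : 2 * k + 1 < T.card)
    (D : Finset V) (hD : D ⊆ T) (hrest : (T \ D).card = 2 * k + 1) :
    (∃ c : V → Fin k, IsCFON G c) ↔
      (∃ c' : {v : V | v ∉ D} → Fin k, IsCFON (G.induce {v : V | v ∉ D}) c') :=
  cfon_reduction_type_class_general G X C hCclique hCclosed Y k T hT D hD hrest
end

section
/- Let G be a finite simple graph and X ⊆ V(G) with |X| = d such that G \ X is a cluster graph. Suppose C₁, …, C_{d+2} are d + 2 distinct connected components (cliques) of G \ X that pairwise have the same type vector: for every pair i, j there is a bijection φ between the vertex sets of C_i and C_j with N(u) ∩ X = N(φ(u)) ∩ X for every vertex u of C_i. Let G' be the graph obtained from G by deleting all vertices of C_{d+2}. Then G admits a conflict-free open neighborhood coloring with k colors if and only if G' does. -/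
open Function

section

variable {V W α : Type*}

def IsUniquelyColoredNbr (H : SimpleGraph W) (c : W → α) (v u : W) : Prop :=
  H.Adj v u ∧ ∀ w, H.Adj v w → c w = c u → w = u

theorem isCFON_iff {H : SimpleGraph W} {c : W → α} :
    IsCFON H c ↔ ∀ v, ∃ u, IsUniquelyColoredNbr H c v u := by
  refine forall_congr' fun v => ⟨?_, ?_⟩
  · rintro ⟨a, u, ⟨hvu, rfl⟩, huniq⟩
    exact ⟨u, hvu, fun w hvw hcw => huniq w ⟨hvw, hcw⟩⟩
  · rintro ⟨u, hvu, huniq⟩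
    exact ⟨c u, u, ⟨hvu, rfl⟩, fun w ⟨hvw, hcw⟩ => huniq w hvw hcw⟩

theorem SimpleGraph.Iso.isUniquelyColoredNbr_symm_apply {H : SimpleGraph V} {H' : SimpleGraph W}
    (e : H ≃g H') {c : W → α} {v : V} {u : W} (h : IsUniquelyColoredNbr H' c (e v) u) :
    IsUniquelyColoredNbr H (c ∘ e) v (e.symm u) := by
  obtain ⟨hvu, huniq⟩ := h
  refine ⟨by simpa using e.symm.map_adj_iff.2 hvu, fun w hvw hcw => ?_⟩
  have hw : e w = u := huniq (e w) (e.map_adj_iff.2 hvw) (by simpa using hcw)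
  rw [← hw, e.symm_apply_apply]

theorem IsCFON.comp_iso {H : SimpleGraph V} {H' : SimpleGraph W} {c : W → α} (hc : IsCFON H' c)
    (e : H ≃g H') : IsCFON H (c ∘ e) :=
  isCFON_iff.2 fun v =>
    let ⟨_, hu⟩ := isCFON_iff.1 hc (e v)
    ⟨_, e.isUniquelyColoredNbr_symm_apply hu⟩

theorem isCFON_induce {G : SimpleGraph V} {c : V → α} {S : Set V}
    (h : ∀ v ∈ S, ∃ u ∈ S, IsUniquelyColoredNbr G c v u) :
    IsCFON (G.induce S) (fun v => c v) := by
  refine isCFON_iff.2 fun ⟨v, hv⟩ => ?_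
  obtain ⟨u, huS, hvu, huniq⟩ := h v hv
  exact ⟨⟨u, huS⟩, hvu, fun w hvw hcw => Subtype.ext (huniq w hvw hcw)⟩

theorem exists_ne_forall_notMem {ι : Type*} [Fintype ι] [Fintype W] {Cs : ι → Finset V}
    (hCs : Pairwise (Disjoint on Cs)) (f : W → V) (i₀ : ι)
    (hcard : Fintype.card W + 1 < Fintype.card ι) : ∃ a ≠ i₀, ∀ w, f w ∉ Cs a := by
  classical
  by_contra! h
  choose g hg using fun a : {a // a ≠ i₀} => h a a.2
  have hg_inj : g.Injective := fun a b hab => Subtype.ext <| by_contra fun hne =>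
    Finset.disjoint_left.1 (hCs hne) (hg a) (hab ▸ hg b)
  have := Fintype.card_le_of_injective g hg_inj
  rw [Fintype.card_subtype_compl, Fintype.card_subtype_eq] at this
  omega

/-- `C` is a connected component of `G \ X` and a clique. -/
structure IsCliqueComponent_s5 (G : SimpleGraph V) (X C : Finset V) : Prop where
  notMem : ∀ v ∈ C, v ∉ X
  isClique : G.IsClique (C : Set V)
  mem_of_adj : ∀ u ∈ C, ∀ v, v ∉ X → G.Adj u v → v ∈ C

namespace IsCliqueComponent_s5

variable {G : SimpleGraph V} {X C D : Finset V}

theorem subset_of_mem_s5 (hC : IsCliqueComponent_s5 G X C) (hD : IsCliqueComponent_s5 G X D) {v : V}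
    (hvC : v ∈ C) (hvD : v ∈ D) : C ⊆ D := fun w hwC => by
  obtain rfl | hvw := eq_or_ne v w
  · exact hvD
  · exact hD.mem_of_adj v hvD w (hC.notMem w hwC) (hC.isClique hvC hwC hvw)

theorem disjoint_of_ne_s5 (hC : IsCliqueComponent_s5 G X C) (hD : IsCliqueComponent_s5 G X D)
    (hCD : C ≠ D) : Disjoint C D :=
  Finset.disjoint_left.2 fun _ hvC hvD =>
    hCD ((hC.subset_of_mem_s5 hD hvC hvD).antisymm (hD.subset_of_mem_s5 hC hvD hvC))

end IsCliqueComponent_s5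

section Swap

variable [DecidableEq V] {A B : Finset V} (φ : A ≃ B) {v : V}

def swapAlong (v : V) : V :=
  if hA : v ∈ A then φ ⟨v, hA⟩ else if hB : v ∈ B then φ.symm ⟨v, hB⟩ else v

theorem swapAlong_of_mem_left (hv : v ∈ A) : swapAlong φ v = φ ⟨v, hv⟩ := dif_pos hv

theorem swapAlong_of_mem_right (hAB : Disjoint A B) (hv : v ∈ B) :
    swapAlong φ v = φ.symm ⟨v, hv⟩ := by
  rw [swapAlong, dif_neg (Finset.disjoint_right.1 hAB hv), dif_pos hv]

theorem swapAlong_of_notMem (hA : v ∉ A) (hB : v ∉ B) : swapAlong φ v = v := by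
  rw [swapAlong, dif_neg hA, dif_neg hB]

theorem swapAlong_symm (hAB : Disjoint A B) : swapAlong φ.symm = swapAlong φ := by
  funext v
  by_cases hA : v ∈ A
  · rw [swapAlong_of_mem_right _ hAB.symm hA, swapAlong_of_mem_left _ hA, Equiv.symm_symm]
  by_cases hB : v ∈ B
  · rw [swapAlong_of_mem_left _ hB, swapAlong_of_mem_right _ hAB hB]
  · rw [swapAlong_of_notMem _ hB hA, swapAlong_of_notMem _ hA hB]

theorem swapAlong_involutive (hAB : Disjoint A B) : Involutive (swapAlong φ) := by
  intro v
  by_cases hA : v ∈ A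
  · rw [swapAlong_of_mem_left _ hA, swapAlong_of_mem_right _ hAB (φ _).2]
    simp
  by_cases hB : v ∈ B
  · rw [swapAlong_of_mem_right _ hAB hB, swapAlong_of_mem_left _ (φ.symm _).2]
    simp
  · rw [swapAlong_of_notMem _ hA hB, swapAlong_of_notMem _ hA hB]

theorem swapAlong_mem_right_iff (hAB : Disjoint A B) : swapAlong φ v ∈ B ↔ v ∈ A := by
  by_cases hA : v ∈ A
  · simp [swapAlong_of_mem_left _ hA, hA]
  by_cases hB : v ∈ B
  · rw [swapAlong_of_mem_right _ hAB hB]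
    exact iff_of_false (Finset.disjoint_left.1 hAB (φ.symm _).2) hA
  · rw [swapAlong_of_notMem _ hA hB]
    exact iff_of_false hB hA

theorem swapAlong_mem_left_iff (hAB : Disjoint A B) : swapAlong φ v ∈ A ↔ v ∈ B := by
  rw [← swapAlong_symm φ hAB]
  exact swapAlong_mem_right_iff φ.symm hAB.symm

theorem swapAlong_notMem_right (hAB : Disjoint A B) (hv : v ∈ B) : swapAlong φ v ∉ B :=
  fun h => Finset.disjoint_left.1 hAB ((swapAlong_mem_right_iff φ hAB).1 h) hv

def extendBySwap (hAB : Disjoint A B) (c' : {v | v ∉ B} → α) (v : V) : α :=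
  if hv : v ∈ B then c' ⟨swapAlong φ v, swapAlong_notMem_right φ hAB hv⟩ else c' ⟨v, hv⟩

theorem extendBySwap_of_notMem (hAB : Disjoint A B) (c' : {v | v ∉ B} → α) (hv : v ∉ B) :
    extendBySwap φ hAB c' v = c' ⟨v, hv⟩ :=
  dif_neg hv

theorem extendBySwap_swapAlong (hAB : Disjoint A B) (c' : {v | v ∉ B} → α) :
    extendBySwap φ hAB c' (swapAlong φ v) = extendBySwap φ hAB c' v := by
  by_cases hvB : v ∈ B
  · rw [extendBySwap_of_notMem φ hAB c' (swapAlong_notMem_right φ hAB hvB), extendBySwap,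
      dif_pos hvB]
  by_cases hvA : v ∈ A
  · rw [extendBySwap, dif_pos ((swapAlong_mem_right_iff φ hAB).2 hvA),
      extendBySwap_of_notMem φ hAB c' hvB]
    exact congrArg c' (Subtype.ext (swapAlong_involutive φ hAB v))
  · rw [swapAlong_of_notMem φ hvA hvB]

variable {G : SimpleGraph V} {X : Finset V}

theorem swapAlong_of_mem_X (hA : IsCliqueComponent_s5 G X A) (hB : IsCliqueComponent_s5 G X B)
    (hv : v ∈ X) : swapAlong φ v = v :=
  swapAlong_of_notMem φ (fun h => hA.notMem v h hv) (fun h => hB.notMem v h hv)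

variable [DecidableRel G.Adj]

theorem adj_swapAlong_of_mem_left (hA : IsCliqueComponent_s5 G X A) (hB : IsCliqueComponent_s5 G X B)
    (hφ : ∀ u : A, X.filter (G.Adj u) = X.filter (G.Adj (φ u))) {u : V} (hu : u ∈ A)
    (huv : G.Adj u v) : G.Adj (swapAlong φ u) (swapAlong φ v) := by
  rw [swapAlong_of_mem_left φ hu]
  by_cases hvX : v ∈ X
  · rw [swapAlong_of_mem_X φ hA hB hvX]
    exact (by simpa [hvX] using Finset.ext_iff.1 (hφ ⟨u, hu⟩) v : _ ↔ _).1 huv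
  · have hv : v ∈ A := hA.mem_of_adj u hu v hvX huv
    rw [swapAlong_of_mem_left φ hv]
    refine hB.isClique (φ _).2 (φ _).2 fun h => huv.ne ?_
    simpa using φ.injective (Subtype.ext h)

theorem adj_swapAlong (hA : IsCliqueComponent_s5 G X A) (hB : IsCliqueComponent_s5 G X B)
    (hAB : Disjoint A B) (hφ : ∀ u : A, X.filter (G.Adj u) = X.filter (G.Adj (φ u))) {u : V}
    (huv : G.Adj u v) : G.Adj (swapAlong φ u) (swapAlong φ v) := by
  have hφ_symm : ∀ u : B, X.filter (G.Adj u) = X.filter (G.Adj (φ.symm u)) := fun u => by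
    simpa using (hφ (φ.symm u)).symm
  have hAB_adj : ∀ u v, u ∈ A ∨ u ∈ B → G.Adj u v →
      G.Adj (swapAlong φ u) (swapAlong φ v) := by
    rintro u v (hu | hu) huv
    · exact adj_swapAlong_of_mem_left φ hA hB hφ hu huv
    · rw [← swapAlong_symm φ hAB]
      exact adj_swapAlong_of_mem_left φ.symm hB hA hφ_symm hu huv
  by_cases hu : u ∈ A ∨ u ∈ B
  · exact hAB_adj u v hu huv
  by_cases hv : v ∈ A ∨ v ∈ B
  · exact (hAB_adj v u hv huv.symm).symm
  rw [not_or] at hu hv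
  rwa [swapAlong_of_notMem φ hu.1 hu.2, swapAlong_of_notMem φ hv.1 hv.2]

def swapIso (hA : IsCliqueComponent_s5 G X A) (hB : IsCliqueComponent_s5 G X B) (hAB : Disjoint A B)
    (hφ : ∀ u : A, X.filter (G.Adj u) = X.filter (G.Adj (φ u))) : G ≃g G where
  toEquiv := (swapAlong_involutive φ hAB).toPerm
  map_rel_iff' {u v} := by
    refine ⟨fun h => ?_, adj_swapAlong φ hA hB hAB hφ⟩
    simpa [swapAlong_involutive φ hAB _] using adj_swapAlong φ hA hB hAB hφ h

end Swap

section Reduction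

variable [DecidableEq V] {G : SimpleGraph V} [DecidableRel G.Adj] {X A B : Finset V}

theorem exists_isCFON_induce_compl_of_isCFON (φ : A ≃ B) (hA : IsCliqueComponent_s5 G X A)
    (hB : IsCliqueComponent_s5 G X B) (hAB : Disjoint A B)
    (hφ : ∀ u : A, X.filter (G.Adj u) = X.filter (G.Adj (φ u))) {c : V → α} (hc : IsCFON G c)
    (hX : ∀ x ∈ X, ∃ u ∉ A, IsUniquelyColoredNbr G c x u) :
    ∃ c' : {v | v ∉ B} → α, IsCFON (G.induce {v | v ∉ B}) c' := by
  have hcA : IsCFON (G.induce {v | v ∉ A}) (fun v => c v) := isCFON_induce fun v hvA => by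
    by_cases hvX : v ∈ X
    · exact hX v hvX
    obtain ⟨u, hu⟩ := isCFON_iff.1 hc v
    exact ⟨u, fun huA => hvA (hA.mem_of_adj u huA v hvX hu.1.symm), hu⟩
  have hbij : Set.BijOn (swapIso φ hA hB hAB hφ) {v | v ∉ B} {v | v ∉ A} :=
    (swapIso φ hA hB hAB hφ).toEquiv.bijOn fun _ => (swapAlong_mem_left_iff φ hAB).not
  exact ⟨_, hcA.comp_iso ((swapIso φ hA hB hAB hφ).induce hbij)⟩

theorem exists_isUniquelyColoredNbr_extendBySwap (φ : A ≃ B) (hA : IsCliqueComponent_s5 G X A)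
    (hB : IsCliqueComponent_s5 G X B) (hAB : Disjoint A B)
    (hφ : ∀ u : A, X.filter (G.Adj u) = X.filter (G.Adj (φ u))) {c' : {v | v ∉ B} → α}
    (hc' : IsCFON (G.induce {v | v ∉ B}) c')
    (hX : ∀ x : {v | v ∉ B}, (x : V) ∈ X →
      ∃ u : {v | v ∉ B}, (u : V) ∉ A ∧
        IsUniquelyColoredNbr (G.induce {v | v ∉ B}) c' x u)
    {v : V} (hv : v ∉ B) : ∃ u, IsUniquelyColoredNbr G (extendBySwap φ hAB c') v u := by
  obtain ⟨u, huA, hu⟩ : ∃ u : {v | v ∉ B}, (v ∈ X → (u : V) ∉ A) ∧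
      IsUniquelyColoredNbr (G.induce {v | v ∉ B}) c' ⟨v, hv⟩ u := by
    by_cases hvX : v ∈ X
    · obtain ⟨u, huA, hu⟩ := hX ⟨v, hv⟩ hvX
      exact ⟨u, fun _ => huA, hu⟩
    · obtain ⟨u, hu⟩ := isCFON_iff.1 hc' ⟨v, hv⟩
      exact ⟨u, fun h => absurd h hvX, hu⟩
  have hsurv : ∀ w (hw : w ∉ B), G.Adj v w →
      extendBySwap φ hAB c' w = extendBySwap φ hAB c' u → w = u := fun w hw hvw hcw => by
    rw [extendBySwap_of_notMem φ hAB c' hw, extendBySwap_of_notMem φ hAB c' u.2] at hcw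
    exact congrArg Subtype.val (hu.2 ⟨w, hw⟩ hvw hcw)
  refine ⟨u, hu.1, fun w hvw hcw => ?_⟩
  by_cases hw : w ∈ B
  · -- `v` sees `B`, so `v ∈ X`, and then the copy of `w` in `A` conflicts with `u` in `G - B`
    have hvX : v ∈ X := by_contra fun hvX => hv (hB.mem_of_adj w hw v hvX hvw.symm)
    have hvw' : G.Adj v (swapAlong φ w) := by
      simpa [swapAlong_of_mem_X φ hA hB hvX] using adj_swapAlong φ hA hB hAB hφ hvw
    have hw' : swapAlong φ w = u := hsurv _ (swapAlong_notMem_right φ hAB hw) hvw'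
      ((extendBySwap_swapAlong φ hAB c').trans hcw)
    exact (huA hvX (hw' ▸ (swapAlong_mem_left_iff φ hAB).2 hw)).elim
  · exact hsurv w hw hvw hcw

theorem exists_isCFON_of_isCFON_induce_compl (φ : A ≃ B) (hA : IsCliqueComponent_s5 G X A)
    (hB : IsCliqueComponent_s5 G X B) (hAB : Disjoint A B)
    (hφ : ∀ u : A, X.filter (G.Adj u) = X.filter (G.Adj (φ u))) {c' : {v | v ∉ B} → α}
    (hc' : IsCFON (G.induce {v | v ∉ B}) c')
    (hX : ∀ x : {v | v ∉ B}, (x : V) ∈ X →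
      ∃ u : {v | v ∉ B}, (u : V) ∉ A ∧
        IsUniquelyColoredNbr (G.induce {v | v ∉ B}) c' x u) :
    ∃ c : V → α, IsCFON G c := by
  refine ⟨extendBySwap φ hAB c', isCFON_iff.2 fun v => ?_⟩
  by_cases hv : v ∈ B
  · obtain ⟨u, hu⟩ := exists_isUniquelyColoredNbr_extendBySwap φ hA hB hAB hφ hc' hX
      (swapAlong_notMem_right φ hAB hv)
    have hinv : extendBySwap φ hAB c' ∘ swapIso φ hA hB hAB hφ = extendBySwap φ hAB c' :=
      funext fun _ => extendBySwap_swapAlong φ hAB c'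
    exact ⟨_, hinv ▸ (swapIso φ hA hB hAB hφ).isUniquelyColoredNbr_symm_apply hu⟩
  · exact exists_isUniquelyColoredNbr_extendBySwap φ hA hB hAB hφ hc' hX hv

end Reduction

end

theorem cfon_reduction_mega_type_general {V : Type*} [DecidableEq V]
    (G : SimpleGraph V) [DecidableRel G.Adj] (X : Finset V) (d : ℕ) (hX : X.card = d)
    (Cs : Fin (d + 2) → Finset V)
    (hCX : ∀ i, ∀ v ∈ Cs i, v ∉ X)
    (hCclique : ∀ i, ∀ u ∈ Cs i, ∀ v ∈ Cs i, u ≠ v → G.Adj u v)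
    (hCclosed : ∀ i, ∀ u ∈ Cs i, ∀ v : V, v ∉ X → G.Adj u v → v ∈ Cs i)
    (hdistinct : ∀ i j : Fin (d + 2), i ≠ j → Cs i ≠ Cs j)
    (hsametype : ∀ i j : Fin (d + 2),
      ∃ φ : {v : V // v ∈ Cs i} ≃ {v : V // v ∈ Cs j},
        ∀ u : {v : V // v ∈ Cs i},
          X.filter (fun x => G.Adj u.1 x) = X.filter (fun x => G.Adj (φ u).1 x))
    (k : ℕ) :
    (∃ c : V → Fin k, IsCFON G c) ↔
      (∃ c' : {v : V | v ∉ Cs (Fin.last (d + 1))} → Fin k,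
        IsCFON (G.induce {v : V | v ∉ Cs (Fin.last (d + 1))}) c') := by
  have hcomp : ∀ i, IsCliqueComponent_s5 G X (Cs i) := fun i => ⟨hCX i, hCclique i, hCclosed i⟩
  have hdisj : Pairwise (Disjoint on Cs) := fun i j hij =>
    (hcomp i).disjoint_of_ne_s5 (hcomp j) (hdistinct i j hij)
  have hcard : Fintype.card X + 1 < Fintype.card (Fin (d + 2)) := by simp [hX]
  constructor
  · rintro ⟨c, hc⟩
    choose U hU using isCFON_iff.1 hc
    obtain ⟨a, haL, ha⟩ := exists_ne_forall_notMem hdisj (fun x : X => U x) _ hcard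
    obtain ⟨φ, hφ⟩ := hsametype a (Fin.last (d + 1))
    exact exists_isCFON_induce_compl_of_isCFON φ (hcomp a) (hcomp _) (hdisj haL) hφ hc
      fun x hx => ⟨U x, ha ⟨x, hx⟩, hU x⟩
  · rintro ⟨c', hc'⟩
    choose U hU using isCFON_iff.1 hc'
    obtain ⟨a, haL, ha⟩ := exists_ne_forall_notMem hdisj
      (fun x : X => (U ⟨x, fun h => hCX _ x h x.2⟩ : V)) _ hcard
    obtain ⟨φ, hφ⟩ := hsametype a (Fin.last (d + 1))
    exact exists_isCFON_of_isCFON_induce_compl φ (hcomp a) (hcomp _) (hdisj haL) hφ hc'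
      fun x hx => ⟨U x, ha ⟨x, hx⟩, hU x⟩

/-- Reduction rule for CF-ON coloring: if `G \ X` is a cluster graph (with `|X| = d`)
and `C₁, …, C_{d+2}` are `d + 2` distinct connected components (cliques) of `G \ X`
that pairwise have the same type vector (there is a bijection between their vertex
sets preserving the neighborhood inside `X`), then deleting all vertices of the last
component `C_{d+2}` preserves CF-ON `k`-colorability. -/
theorem cfon_reduction_mega_type {V : Type*} [Fintype V] [DecidableEq V]
    (G : SimpleGraph V) [DecidableRel G.Adj] (X : Finset V) (d : ℕ) (hX : X.card = d)
    (hcluster : ∀ u v w : V, u ∉ X → v ∉ X → w ∉ X →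
      G.Adj u v → G.Adj v w → u ≠ w → G.Adj u w)
    (Cs : Fin (d + 2) → Finset V)
    (hCX : ∀ i, ∀ v ∈ Cs i, v ∉ X)
    (hCne : ∀ i, (Cs i).Nonempty)
    (hCclique : ∀ i, ∀ u ∈ Cs i, ∀ v ∈ Cs i, u ≠ v → G.Adj u v)
    (hCclosed : ∀ i, ∀ u ∈ Cs i, ∀ v : V, v ∉ X → G.Adj u v → v ∈ Cs i)
    (hdistinct : ∀ i j : Fin (d + 2), i ≠ j → Cs i ≠ Cs j)
    (hsametype : ∀ i j : Fin (d + 2),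
      ∃ φ : {v : V // v ∈ Cs i} ≃ {v : V // v ∈ Cs j},
        ∀ u : {v : V // v ∈ Cs i},
          X.filter (fun x => G.Adj u.1 x) = X.filter (fun x => G.Adj (φ u).1 x))
    (k : ℕ) :
    (∃ c : V → Fin k, IsCFON G c) ↔
      (∃ c' : {v : V | v ∉ Cs (Fin.last (d + 1))} → Fin k,
        IsCFON (G.induce {v : V | v ∉ Cs (Fin.last (d + 1))}) c') :=
  cfon_reduction_mega_type_general G X d hX Cs hCX hCclique hCclosed hdistinct hsametype k
end

section
/- Let G be a finite simple graph, let X ⊆ V(G) be such that the induced subgraph G \ X is a connected threshold graph, and let p be the minimum number of colors in a coloring c : V(G) → S such that for every x ∈ X some color is assigned to exactly one vertex of N[x]. Then p ≤ χcf[G] ≤ p + 1. -/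
/-- A graph is a threshold graph if it can be built from the empty graph by repeatedly
adding either an isolated vertex or a universal vertex: there is an ordering of the
vertices in which every vertex is adjacent to all, or to none, of the earlier ones. -/
def IsThresholdGraph {W : Type*} (H : SimpleGraph W) : Prop :=
  ∃ (n : ℕ) (e : Fin n ≃ W), ∀ i : Fin n,
    (∀ j : Fin n, j < i → H.Adj (e j) (e i)) ∨ (∀ j : Fin n, j < i → ¬ H.Adj (e j) (e i))

namespace SimpleGraph

variable {V S T : Type*} {G : SimpleGraph V}

theorem Connected.eq_of_isIsolated (hconn : G.Connected) {u : V}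
    (hu : G.IsIsolated u) (v : V) : v = u := by
  by_contra hvu
  obtain ⟨w⟩ := hconn.preconnected u v
  exact hu _ (w.adj_snd (w.not_nil_of_ne (Ne.symm hvu)))

theorem _root_.IsThresholdGraph.exists_forall_adj_of_connected (hthr : IsThresholdGraph G)
    (hconn : G.Connected) : ∃ u, ∀ v, v ≠ u → G.Adj u v := by
  obtain ⟨n, e, he⟩ := hthr
  obtain ⟨m, rfl⟩ : ∃ m, n = m + 1 :=
    Nat.exists_eq_succ_of_ne_zero fun hn => (hn ▸ e.symm hconn.nonempty.some).elim0
  have earlier : ∀ v, v ≠ e (Fin.last m) → e.symm v < Fin.last m := fun v hv =>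
    Fin.lt_last_iff_ne_last.mpr fun h => hv (by rw [← h, Equiv.apply_symm_apply])
  refine ⟨e (Fin.last m), fun v hv => ?_⟩
  rcases he (Fin.last m) with huniv | hisol
  · simpa using (huniv _ (earlier v hv)).symm
  · have hiso : G.IsIsolated (e (Fin.last m)) := fun w hw =>
      hisol _ (earlier w (G.ne_of_adj hw).symm) (by simpa using hw.symm)
    exact (hv (hconn.eq_of_isIsolated hiso v)).elim

def ConflictFreeAt (G : SimpleGraph V) (c : V → S) (v : V) : Prop :=
  ∃ a : S, ∃! u : V, (G.Adj v u ∨ u = v) ∧ c u = a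

theorem ConflictFreeAt.comp_injective {c : V → S} {v : V} (h : G.ConflictFreeAt c v)
    {f : S → T} (hf : f.Injective) : G.ConflictFreeAt (f ∘ c) v := by
  obtain ⟨a, u, hu, huniq⟩ := h
  exact ⟨f a, u, ⟨hu.1, congrArg f hu.2⟩, fun w hw => huniq w ⟨hw.1, hf hw.2⟩⟩

theorem conflictFreeAt_of_injective {c : V → S} (hc : c.Injective) (v : V) :
    G.ConflictFreeAt c v :=
  ⟨c v, v, ⟨Or.inr rfl, rfl⟩, fun _ hw => hc hw.2⟩

def recolorFresh [DecidableEq V] (c : V → S) (u : V) (v : V) : Option S :=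
  if v = u then none else some (c v)

theorem recolorFresh_eq_none_iff [DecidableEq V] {c : V → S} {u v : V} :
    recolorFresh c u v = none ↔ v = u := by
  unfold recolorFresh
  split_ifs with h <;> simp [h]

theorem recolorFresh_eq_some_iff [DecidableEq V] {c : V → S} {u v : V} {a : S} :
    recolorFresh c u v = some a ↔ v ≠ u ∧ c v = a := by
  unfold recolorFresh
  split_ifs with h <;> simp [h]

theorem conflictFreeAt_recolorFresh_of_mem [DecidableEq V] (c : V → S) {u v : V}
    (hu : G.Adj v u ∨ u = v) : G.ConflictFreeAt (recolorFresh c u) v :=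
  ⟨none, u, ⟨hu, recolorFresh_eq_none_iff.mpr rfl⟩,
    fun _ hw => recolorFresh_eq_none_iff.mp hw.2⟩

theorem ConflictFreeAt.recolorFresh [DecidableEq V] {c : V → S} {v : V}
    (h : G.ConflictFreeAt c v) (u : V) : G.ConflictFreeAt (recolorFresh c u) v := by
  obtain ⟨a, w, ⟨hwv, hwa⟩, huniq⟩ := h
  by_cases hwu : w = u
  · exact conflictFreeAt_recolorFresh_of_mem c (hwu ▸ hwv)
  · refine ⟨some a, w, ⟨hwv, recolorFresh_eq_some_iff.mpr ⟨hwu, hwa⟩⟩, fun y hy => ?_⟩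
    exact huniq y ⟨hy.1, (recolorFresh_eq_some_iff.mp hy.2).2⟩

theorem conflictFreeAt_recolorFresh [DecidableEq V] {X : Set V} {c : V → S}
    (hc : ∀ x ∈ X, G.ConflictFreeAt c x) {u : V} (hu : ∀ v ∉ X, G.Adj v u ∨ u = v)
    (v : V) :
    G.ConflictFreeAt (recolorFresh c u) v := by
  by_cases hv : v ∈ X
  · exact (hc v hv).recolorFresh u
  · exact conflictFreeAt_recolorFresh_of_mem c (hu v hv)

end SimpleGraph

open SimpleGraph

/-- If `G \ X` is a connected threshold graph and `p` is the minimum number of colors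
in a coloring of `G` such that every `x ∈ X` has a uniquely colored vertex in its
closed neighborhood, then `p ≤ χcf[G] ≤ p + 1`. -/
theorem cfcn_dist_to_threshold {V : Type*} [Fintype V] (G : SimpleGraph V) (X : Set V)
    (hthr : IsThresholdGraph (G.induce Xᶜ))
    (hconn : (G.induce Xᶜ).Connected)
    (p q : ℕ)
    (hp : p = sInf {k : ℕ | ∃ c : V → Fin k, ∀ x ∈ X,
      ∃ a : Fin k, ∃! u : V, (G.Adj x u ∨ u = x) ∧ c u = a})
    (hq : q = sInf {k : ℕ | ∃ c : V → Fin k, IsCFCN G c}) :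
    p ≤ q ∧ q ≤ p + 1 := by
  classical
  set A := {k | ∃ c : V → Fin k, ∀ v, G.ConflictFreeAt c v}
  set B := {k | ∃ c : V → Fin k, ∀ x ∈ X, G.ConflictFreeAt c x}
  change q = sInf A at hq
  change p = sInf B at hp
  have hcard : Fintype.card V ∈ A :=
    ⟨Fintype.equivFin V, conflictFreeAt_of_injective (Fintype.equivFin V).injective⟩
  have hAB : A ⊆ B := fun _ ⟨c, hc⟩ => ⟨c, fun x _ => hc x⟩
  refine ⟨hp ▸ hq ▸ Nat.sInf_le (hAB (Nat.sInf_mem ⟨_, hcard⟩)), ?_⟩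
  obtain ⟨c, hc⟩ : p ∈ B := hp ▸ Nat.sInf_mem ⟨_, hAB hcard⟩
  obtain ⟨⟨u, _⟩, hu⟩ := hthr.exists_forall_adj_of_connected hconn
  have hdom : ∀ v ∉ X, G.Adj v u ∨ u = v := fun v hv =>
    or_iff_not_imp_right.mpr fun hne =>
      (hu ⟨v, hv⟩ fun h => hne (congrArg Subtype.val h).symm).symm
  exact hq ▸ Nat.sInf_le ⟨(finSuccEquiv p).symm ∘ recolorFresh c u, fun v =>
    (conflictFreeAt_recolorFresh hc hdom v).comp_injective (finSuccEquiv p).symm.injective⟩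
end

section
/- Let G be a finite split graph with at least one edge. Then 2 ≤ χcf[G] ≤ 3. -/
namespace IsCFCN

variable {W S : Type*} {H : SimpleGraph W} {c : W → S}

lemma nontrivial_of_adj (hc : IsCFCN H c) {u v : W} (huv : H.Adj u v) : Nontrivial S := by
  by_contra hS
  have : Subsingleton S := not_nontrivial_iff_subsingleton.mp hS
  obtain ⟨_, x, _, huniq⟩ := hc u
  have hvx : v = x := huniq v ⟨Or.inl huv, Subsingleton.elim _ _⟩
  have hux : u = x := huniq u ⟨Or.inr rfl, Subsingleton.elim _ _⟩
  exact H.ne_of_adj huv (hux.trans hvx.symm)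

lemma two_le_of_adj {k : ℕ} {c : W → Fin k} (hc : IsCFCN H c) {u v : W} (huv : H.Adj u v) :
    2 ≤ k :=
  Fin.nontrivial_iff_two_le.mp (hc.nontrivial_of_adj huv)

end IsCFCN

open Classical in
lemma exists_isCFCN_fin_three_of_isIndepSet_nonNeighbors {W : Type*} (H : SimpleGraph W)
    (w : W) (hw : H.IsIndepSet {v | v ≠ w ∧ ¬ H.Adj w v}) :
    ∃ c : W → Fin 3, IsCFCN H c := by
  refine ⟨fun v => if v = w then 1 else if H.Adj w v then 0 else 2, fun v => ?_⟩
  by_cases hv : v ≠ w ∧ ¬ H.Adj w v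
  · refine ⟨2, v, ⟨Or.inr rfl, by simp [hv.1, hv.2]⟩, ?_⟩
    rintro x ⟨hadj | rfl, hx⟩
    · have hxw : x ≠ w := by rintro rfl; simp at hx
      have hwx : ¬ H.Adj w x := by intro h; simp [hxw, h] at hx
      exact absurd hadj (hw hv ⟨hxw, hwx⟩ (H.ne_of_adj hadj))
    · rfl
  · have hwv : H.Adj v w ∨ w = v := by
      by_cases hvw : v = w
      · exact Or.inr hvw.symm
      · exact Or.inl (not_and_not_right.mp hv hvw).symm
    refine ⟨1, w, ⟨hwv, by simp⟩, ?_⟩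
    rintro x ⟨-, hx⟩
    by_contra hxw
    simp only [hxw, if_false] at hx
    split_ifs at hx <;> simp at hx

theorem cfcn_split_graph_bounds_general {V : Type*} (G : SimpleGraph V)
    (C : Set V)
    (hclique : ∀ u ∈ C, ∀ v ∈ C, u ≠ v → G.Adj u v)
    (hindep : ∀ u v : V, u ∉ C → v ∉ C → ¬ G.Adj u v)
    (hedge : ∃ u v : V, G.Adj u v) :
    2 ≤ sInf {k : ℕ | ∃ c : V → Fin k, IsCFCN G c} ∧
      sInf {k : ℕ | ∃ c : V → Fin k, IsCFCN G c} ≤ 3 := by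
  obtain ⟨u, v, huv⟩ := hedge
  obtain ⟨w, hwC⟩ : ∃ w, w ∈ C := by
    by_contra! h
    exact hindep u v (h u) (h v) huv
  have hnonNeighbors : G.IsIndepSet {x | x ≠ w ∧ ¬ G.Adj w x} := by
    refine fun x hx y hy _ => hindep x y ?_ ?_
    · exact fun hxC => hx.2 (hclique w hwC x hxC hx.1.symm)
    · exact fun hyC => hy.2 (hclique w hwC y hyC hy.1.symm)
  have hthree : 3 ∈ {k : ℕ | ∃ c : V → Fin k, IsCFCN G c} :=
    exists_isCFCN_fin_three_of_isIndepSet_nonNeighbors G w hnonNeighbors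
  exact ⟨le_csInf ⟨3, hthree⟩ fun k ⟨_, hc⟩ => hc.two_le_of_adj huv, Nat.sInf_le hthree⟩

/-- For a split graph `G` (vertex set partitioned into a clique `C` and an
independent set `Cᶜ`) with at least one edge, `2 ≤ χcf[G] ≤ 3`. -/
theorem cfcn_split_graph_bounds {V : Type*} [Fintype V] (G : SimpleGraph V)
    (C : Set V)
    (hclique : ∀ u ∈ C, ∀ v ∈ C, u ≠ v → G.Adj u v)
    (hindep : ∀ u v : V, u ∉ C → v ∉ C → ¬ G.Adj u v)
    (hedge : ∃ u v : V, G.Adj u v) :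
    2 ≤ sInf {k : ℕ | ∃ c : V → Fin k, IsCFCN G c} ∧
      sInf {k : ℕ | ∃ c : V → Fin k, IsCFCN G c} ≤ 3 :=
  cfcn_split_graph_bounds_general G C hclique hindep hedge
end

section
/- Let G be a finite interval graph with at least one edge. Then 2 ≤ χcf[G] ≤ 4. -/
/-!
With a single colour, the closed neighbourhood of an endpoint of an edge is monochromatic and has
two vertices, so no colour is unique in it.

For four colours, choose intervals `x₀, x₁, …` greedily: `x₀` has the leftmost left endpoint, and
`xᵢ₊₁` is, among the intervals starting no later than the right end of `xᵢ`, the one reaching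
farthest right — or, if none of them reaches beyond `xᵢ`, the interval starting next to the right.
Colour `xᵢ` with `1 + i mod 3` and every other vertex with `0`. For a vertex `v`, the first `xₖ`
reaching `v` meets `v`; since `xₖ₊₁` already reaches past `v`, no `xⱼ` with `j ≥ k + 3` starts
before `v` ends. So the chain vertices in `N[v]` are among `xₖ, xₖ₊₁, xₖ₊₂`, and the colour of
`xₖ` occurs exactly once in `N[v]`.
-/

theorem IsCFCN.nontrivial {W S : Type*} {H : SimpleGraph W} {c : W → S} (hc : IsCFCN H c)
    {u v : W} (huv : H.Adj u v) : Nontrivial S := by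
  by_contra hS
  rw [not_nontrivial_iff_subsingleton] at hS
  obtain ⟨_, w, -, hw⟩ := hc v
  have hu : u = w := hw u ⟨.inl huv.symm, Subsingleton.elim _ _⟩
  have hv : v = w := hw v ⟨.inr rfl, Subsingleton.elim _ _⟩
  exact H.ne_of_adj huv (hu.trans hv.symm)

section ChainColoring

variable {W : Type*}

open Classical in
noncomputable def chainColoring (x : ℕ → Option W) (v : W) : Fin 4 :=
  if h : ∃ n, x n = some v then (Fin.ofNat 3 (Nat.find h)).succ else 0

variable {x : ℕ → Option W} (hinj : ∀ {m n v}, x m = some v → x n = some v → m = n)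
include hinj

open Classical in
theorem chainColoring_of_eq_some {n : ℕ} {v : W} (hv : x n = some v) :
    chainColoring x v = (Fin.ofNat 3 n).succ := by
  have h : ∃ n, x n = some v := ⟨n, hv⟩
  rw [chainColoring, dif_pos h, hinj (Nat.find_spec h) hv]

theorem isCFCN_chainColoring (H : SimpleGraph W)
    (hwin : ∀ v, ∃ k u, x k = some u ∧ (H.Adj v u ∨ u = v) ∧
      ∀ j w, x j = some w → (H.Adj v w ∨ w = v) → k ≤ j ∧ j ≤ k + 2) :
    IsCFCN H (chainColoring x) := by
  intro v
  obtain ⟨k, u, hu, huv, hk⟩ := hwin v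
  refine ⟨_, u, ⟨huv, rfl⟩, fun w ⟨hwv, hcol⟩ => ?_⟩
  rw [chainColoring_of_eq_some hinj hu] at hcol
  obtain ⟨j, hw⟩ : ∃ j, x j = some w := by
    by_contra h
    rw [chainColoring, dif_neg h] at hcol
    exact Fin.succ_ne_zero _ hcol.symm
  rw [chainColoring_of_eq_some hinj hw, Fin.succ_inj, Fin.ext_iff, Fin.val_ofNat,
    Fin.val_ofNat] at hcol
  obtain ⟨hkj, hjk⟩ := hk j w hw hwv
  obtain rfl : j = k := by omega
  exact Option.some.inj (hw.symm.trans hu)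

end ChainColoring

section GreedyChain

variable {V : Type*} (a b : V → ℝ)

def IsGreedyStep (x : V) : Option V → Prop
  | some y => b x < b y ∧ (∀ w, a w ≤ b x → b w ≤ b y) ∧ (∀ w, b x < a w → a y ≤ b w)
  | none => ∀ w, b w ≤ b x

variable [Finite V] (hab : ∀ v, a v ≤ b v)
include hab

theorem exists_isGreedyStep (x : V) : ∃ o, IsGreedyStep a b x o := by
  have : Nonempty {w // a w ≤ b x} := ⟨⟨x, hab x⟩⟩
  obtain ⟨⟨y, hyx⟩, hy⟩ := Finite.exists_max fun w : {w // a w ≤ b x} => b w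
  by_cases hreach : b x < b y
  · exact ⟨some y, hreach, fun w hw => hy ⟨w, hw⟩,
      fun w hw => hyx.trans (hw.le.trans (hab w))⟩
  rw [not_lt] at hreach
  by_cases hgap : ∃ w, b x < a w
  · obtain ⟨w₀, hw₀⟩ := hgap
    have : Nonempty {w // b x < a w} := ⟨⟨w₀, hw₀⟩⟩
    obtain ⟨⟨z, hxz⟩, hz⟩ := Finite.exists_min fun w : {w // b x < a w} => a w
    have hxz' : b x < b z := hxz.trans_le (hab z)
    exact ⟨some z, hxz', fun w hw => ((hy ⟨w, hw⟩).trans hreach).trans hxz'.le,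
      fun w hw => (hz ⟨w, hw⟩).trans (hab w)⟩
  · simp only [not_exists, not_lt] at hgap
    exact ⟨none, fun w => (hy ⟨w, hgap w⟩).trans hreach⟩

noncomputable def greedyStep (x : V) : Option V := (exists_isGreedyStep a b hab x).choose

theorem isGreedyStep_greedyStep (x : V) : IsGreedyStep a b x (greedyStep a b hab x) :=
  (exists_isGreedyStep a b hab x).choose_spec

variable [Nonempty V]

noncomputable def greedyChain : ℕ → Option V
  | 0 => some (Finite.exists_min a).choose
  | n + 1 => (greedyChain n).bind (greedyStep a b hab)

variable {a b hab}

theorem greedyChain_succ {n : ℕ} {x : V} (hx : greedyChain a b hab n = some x) :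
    greedyChain a b hab (n + 1) = greedyStep a b hab x := by
  rw [greedyChain, hx, Option.bind_some]

theorem exists_greedyChain_pred {n : ℕ} {y : V} (hy : greedyChain a b hab (n + 1) = some y) :
    ∃ x, greedyChain a b hab n = some x ∧ IsGreedyStep a b x (some y) := by
  obtain ⟨x, hx, hxy⟩ := Option.bind_eq_some_iff.1 hy
  exact ⟨x, hx, hxy ▸ isGreedyStep_greedyStep a b hab x⟩

theorem exists_greedyChain_of_le {m n : ℕ} (hmn : m ≤ n) {y : V}
    (hy : greedyChain a b hab n = some y) : ∃ x, greedyChain a b hab m = some x := by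
  induction n, hmn using Nat.le_induction generalizing y with
  | base => exact ⟨y, hy⟩
  | succ n _ ih =>
    obtain ⟨x, hx, -⟩ := exists_greedyChain_pred hy
    exact ih hx

theorem greedyChain_lt {m n : ℕ} (hmn : m < n) {x y : V} (hx : greedyChain a b hab m = some x)
    (hy : greedyChain a b hab n = some y) : b x < b y := by
  induction n, hmn using Nat.le_induction generalizing y with
  | base =>
    obtain ⟨x', hx', hstep⟩ := exists_greedyChain_pred hy
    obtain rfl := Option.some.inj (hx.symm.trans hx')
    exact hstep.1
  | succ n _ ih =>
    obtain ⟨z, hz, hstep⟩ := exists_greedyChain_pred hy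
    exact (ih hz).trans hstep.1

theorem greedyChain_le {m n : ℕ} (hmn : m ≤ n) {x y : V} (hx : greedyChain a b hab m = some x)
    (hy : greedyChain a b hab n = some y) : b x ≤ b y := by
  rcases hmn.lt_or_eq with hmn | rfl
  · exact (greedyChain_lt hmn hx hy).le
  · obtain rfl := Option.some.inj (hx.symm.trans hy)
    exact le_rfl

theorem eq_of_greedyChain_eq_some {m n : ℕ} {x : V} (hm : greedyChain a b hab m = some x)
    (hn : greedyChain a b hab n = some x) : m = n := by
  by_contra hmn
  rcases Nat.lt_or_gt_of_ne hmn with h | h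
  · exact (greedyChain_lt h hm hn).false
  · exact (greedyChain_lt h hn hm).false

theorem greedyChain_left_le_of_forall_lt {k : ℕ} {x v : V} (hx : greedyChain a b hab k = some x)
    (hbefore : ∀ j < k, ∀ y, greedyChain a b hab j = some y → b y < a v) : a x ≤ b v := by
  cases k with
  | zero =>
    obtain rfl := Option.some.inj hx
    exact ((Finite.exists_min a).choose_spec v).trans (hab v)
  | succ k =>
    obtain ⟨y, hy, hstep⟩ := exists_greedyChain_pred hx
    exact hstep.2.2 v (hbefore k k.lt_succ_self y hy)

theorem le_add_two_of_greedyChain {k j : ℕ} {x u v : V} (hx : greedyChain a b hab k = some x)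
    (hvx : a v ≤ b x) (hu : greedyChain a b hab j = some u) (huv : a u ≤ b v) : j ≤ k + 2 := by
  by_contra! hj
  obtain ⟨i, rfl⟩ : ∃ i, j = i + 2 := ⟨j - 2, by omega⟩
  obtain ⟨x₁, hx₁, hstep₁⟩ := exists_greedyChain_pred hu
  obtain ⟨x₀, hx₀, hstep₀⟩ := exists_greedyChain_pred hx₁
  obtain ⟨y, hy⟩ := exists_greedyChain_of_le (by omega : k + 1 ≤ i) hx₀
  obtain ⟨x', hx', hstep⟩ := exists_greedyChain_pred hy
  obtain rfl := Option.some.inj (hx.symm.trans hx')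
  have hvy : b v ≤ b y := hstep.2.1 v hvx
  have hux₁ : b u ≤ b x₁ :=
    hstep₀.2.1 u (huv.trans (hvy.trans (greedyChain_le (by omega) hy hx₀)))
  exact hux₁.not_gt hstep₁.1

variable (a b hab)

theorem exists_greedyChain_terminal :
    ∃ n x, greedyChain a b hab n = some x ∧ ∀ w, b w ≤ b x := by
  suffices h : ∃ n x, greedyChain a b hab n = some x ∧ greedyStep a b hab x = none by
    obtain ⟨n, x, hx, hstep⟩ := h
    have hterm : IsGreedyStep a b x none := hstep ▸ isGreedyStep_greedyStep a b hab x
    exact ⟨n, x, hx, hterm⟩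
  by_contra! hstep
  have hsome : ∀ n, ∃ x, greedyChain a b hab n = some x := by
    intro n
    induction n with
    | zero => exact ⟨_, rfl⟩
    | succ n ih =>
      obtain ⟨x, hx⟩ := ih
      rw [greedyChain_succ hx]
      exact Option.ne_none_iff_exists'.1 (hstep n x hx)
  choose f hf using hsome
  exact not_injective_infinite_finite f fun m n hmn =>
    eq_of_greedyChain_eq_some (hf m) (hmn ▸ hf n)

theorem exists_greedyChain_window (v : V) :
    ∃ k x, greedyChain a b hab k = some x ∧ (a x ≤ b v ∧ a v ≤ b x) ∧
      ∀ j u, greedyChain a b hab j = some u → a u ≤ b v ∧ a v ≤ b u → k ≤ j ∧ j ≤ k + 2 := by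
  classical
  have hreach : ∃ k x, greedyChain a b hab k = some x ∧ a v ≤ b x := by
    obtain ⟨n, x, hx, hterm⟩ := exists_greedyChain_terminal a b hab
    exact ⟨n, x, hx, (hab v).trans (hterm v)⟩
  obtain ⟨x, hx, hvx⟩ := Nat.find_spec hreach
  have hbefore : ∀ j < Nat.find hreach, ∀ y, greedyChain a b hab j = some y → b y < a v :=
    fun j hj y hy => not_le.1 fun h => Nat.find_min hreach hj ⟨y, hy, h⟩
  exact ⟨_, x, hx, ⟨greedyChain_left_le_of_forall_lt hx hbefore, hvx⟩, fun j u hu huv =>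
    ⟨Nat.find_min' hreach ⟨u, hu, huv.2⟩, le_add_two_of_greedyChain hx hvx hu huv.1⟩⟩

end GreedyChain

theorem adj_or_eq_iff_of_intervals {V : Type*} {G : SimpleGraph V} {a b : V → ℝ}
    (hab : ∀ v, a v ≤ b v)
    (hrep : ∀ u v : V, u ≠ v →
      (G.Adj u v ↔ (Set.Icc (a u) (b u) ∩ Set.Icc (a v) (b v)).Nonempty))
    {u v : V} : G.Adj v u ∨ u = v ↔ a u ≤ b v ∧ a v ≤ b u := by
  rcases eq_or_ne u v with rfl | huv
  · simp [hab u]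
  · rw [hrep v u huv.symm, Set.Icc_inter_Icc, Set.nonempty_Icc, max_le_iff, le_min_iff,
      le_min_iff]
    simp only [hab, huv, true_and, and_true, or_false]
    exact and_comm

/-- For an interval graph `G` (given by an interval representation `v ↦ [a v, b v]`)
with at least one edge, `2 ≤ χcf[G] ≤ 4`. -/
theorem cfcn_interval_bounds {V : Type*} [Fintype V] (G : SimpleGraph V)
    (a b : V → ℝ) (hab : ∀ v : V, a v ≤ b v)
    (hrep : ∀ u v : V, u ≠ v →
      (G.Adj u v ↔ (Set.Icc (a u) (b u) ∩ Set.Icc (a v) (b v)).Nonempty))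
    (hedge : ∃ u v : V, G.Adj u v) :
    2 ≤ sInf {k : ℕ | ∃ c : V → Fin k, IsCFCN G c} ∧
      sInf {k : ℕ | ∃ c : V → Fin k, IsCFCN G c} ≤ 4 := by
  obtain ⟨u, v, huv⟩ := hedge
  have : Nonempty V := ⟨u⟩
  have hwin (w : V) := exists_greedyChain_window a b hab w
  simp only [← adj_or_eq_iff_of_intervals hab hrep] at hwin
  have h4 : 4 ∈ {k : ℕ | ∃ c : V → Fin k, IsCFCN G c} :=
    ⟨_, isCFCN_chainColoring eq_of_greedyChain_eq_some G hwin⟩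
  refine ⟨le_csInf ⟨4, h4⟩ fun k ⟨c, hc⟩ => ?_, Nat.sInf_le h4⟩
  exact Fin.nontrivial_iff_two_le.1 (hc.nontrivial huv)
end

section
/- Let G be a finite connected interval graph with at least two edges. Then 2 ≤ χcf(G) ≤ 4. -/
open Set Function

theorem Set.Icc_inter_Icc_nonempty_iff {α : Type*} [LinearOrder α] {a₁ b₁ a₂ b₂ : α}
    (h₁ : a₁ ≤ b₁) (h₂ : a₂ ≤ b₂) :
    (Icc a₁ b₁ ∩ Icc a₂ b₂).Nonempty ↔ a₁ ≤ b₂ ∧ a₂ ≤ b₁ := by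
  rw [Icc_inter_Icc, nonempty_Icc, sup_le_iff, le_inf_iff, le_inf_iff]
  tauto

namespace SimpleGraph

variable {V : Type*} {G : SimpleGraph V}

theorem Reachable.mem_of_adj_closed {s : Set V} (hs : ∀ u v, G.Adj u v → u ∈ s → v ∈ s)
    {x y : V} (h : G.Reachable x y) (hx : x ∈ s) : y ∈ s := by
  rw [reachable_iff_reflTransGen] at h
  induction h with
  | refl => exact hx
  | tail _ hadj ih => exact hs _ _ hadj ih

theorem Preconnected.edgeSet_subsingleton_of_adj_unique (hG : G.Preconnected)
    (huniq : ∀ v u w, G.Adj v u → G.Adj v w → u = w) : G.edgeSet.Subsingleton := by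
  intro e he e' he'
  induction e with | h x y => ?_
  induction e' with | h p q => ?_
  have hxy : G.Adj x y := he
  have hpq : G.Adj p q := he'
  have hclosed : ∀ u v, G.Adj u v → u ∈ ({x, y} : Set V) → v ∈ ({x, y} : Set V) := by
    rintro u v huv (rfl | rfl)
    · exact Or.inr (huniq u v y huv hxy)
    · exact Or.inl (huniq u v x huv hxy.symm)
  have hp := (hG x p).mem_of_adj_closed hclosed (Or.inl rfl)
  have hq := (hG x q).mem_of_adj_closed hclosed (Or.inl rfl)
  rcases hp with rfl | rfl <;> rcases hq with rfl | rfl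
  all_goals first | exact absurd rfl hpq.ne | simp [Sym2.eq_swap]

end SimpleGraph

section CFON

variable {V : Type*} {G : SimpleGraph V}

theorem IsCFON.adj_unique {S : Type*} [Subsingleton S] {c : V → S} (hc : IsCFON G c)
    {v u w : V} (hu : G.Adj v u) (hw : G.Adj v w) : u = w := by
  obtain ⟨_, z, -, hz⟩ := hc v
  exact (hz u ⟨hu, Subsingleton.elim _ _⟩).trans (hz w ⟨hw, Subsingleton.elim _ _⟩).symm

theorem IsCFON.two_le {k : ℕ} {c : V → Fin k} (hc : IsCFON G c) (hG : G.Preconnected)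
    (hedges : G.edgeSet.Nontrivial) : 2 ≤ k := by
  by_contra hk
  have : Subsingleton (Fin k) := Fin.subsingleton_iff_le_one.mpr (by omega)
  exact hedges.not_subsingleton
    (hG.edgeSet_subsingleton_of_adj_unique fun _ _ _ => hc.adj_unique)

open Classical in
noncomputable def modThreeColoring (P : ℕ → V) (K : ℕ) (w : V) : Fin 4 :=
  if w ∈ P '' Iic K then ⟨invFunOn P (Iic K) w % 3 + 1, by omega⟩ else 0

theorem modThreeColoring_apply {P : ℕ → V} {K i : ℕ} (hinj : InjOn P (Iic K)) (hi : i ≤ K) :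
    modThreeColoring P K (P i) = ⟨i % 3 + 1, by omega⟩ := by
  rw [modThreeColoring, if_pos (mem_image_of_mem P (mem_Iic.2 hi)), Fin.mk.injEq,
    hinj.leftInvOn_invFunOn (mem_Iic.2 hi)]

theorem modThreeColoring_eq_apply {P : ℕ → V} {K i : ℕ} (hinj : InjOn P (Iic K)) (hi : i ≤ K)
    {w : V} (hw : modThreeColoring P K w = modThreeColoring P K (P i)) :
    ∃ j ≤ K, w = P j ∧ j % 3 = i % 3 := by
  rw [modThreeColoring_apply hinj hi, modThreeColoring] at hw
  split_ifs at hw with hmem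
  · obtain ⟨j, hj, rfl⟩ := hmem
    rw [Fin.mk.injEq, hinj.leftInvOn_invFunOn hj] at hw
    exact ⟨j, hj, rfl, by omega⟩
  · exact absurd (congrArg Fin.val hw) (by simp)

theorem exists_isCFON_fin_four_of_dominating_seq {P : ℕ → V} {K : ℕ} (hinj : InjOn P (Iic K))
    (hnear : ∀ w, ∃ k ≤ K, G.Adj w (P k) ∧
      ∀ j ≤ K, G.Adj w (P j) → j ≤ k + 2 ∧ k ≤ j + 2) :
    ∃ c : V → Fin 4, IsCFON G c := by
  refine ⟨modThreeColoring P K, fun w => ?_⟩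
  obtain ⟨k, hk, hadj, hwin⟩ := hnear w
  refine ⟨_, P k, ⟨hadj, rfl⟩, fun u ⟨hu, hcu⟩ => ?_⟩
  obtain ⟨j, hj, rfl, hjk⟩ := modThreeColoring_eq_apply hinj hk hcu
  have := hwin j hj hu
  rw [show j = k by omega]

theorem exists_isCFON_fin_four_of_forall_adj {v u : V} (hvu : v ≠ u)
    (hv : ∀ w, w ≠ v → G.Adj w v) : ∃ c : V → Fin 4, IsCFON G c := by
  refine exists_isCFON_fin_four_of_dominating_seq (P := fun i => if i = 0 then v else u) (K := 1)
    ?_ fun w => ?_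
  · intro i hi j hj h
    simp only [mem_Iic] at hi hj
    interval_cases i <;> interval_cases j <;> simp_all
  · by_cases hw : w = v
    · subst hw
      exact ⟨1, le_rfl, by simpa using (hv u hvu.symm).symm, fun j hj _ => by omega⟩
    · exact ⟨0, Nat.zero_le _, by simpa using hv w hw, fun j hj _ => by omega⟩

end CFON

section GreedyChain

variable {V : Type*} {a b : V → ℝ} {P : ℕ → V} {K : ℕ}

structure IsGreedyChain (a b : V → ℝ) (P : ℕ → V) (K : ℕ) : Prop where
  start : ∀ w, a (P 0) ≤ a w
  step : ∀ k, a (P (k + 1)) ≤ b (P k)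
  farthest : ∀ k w, a w ≤ b (P k) → b w ≤ b (P (k + 1))
  grows : ∀ k < K, b (P k) < b (P (k + 1))
  stalls : b (P (K + 1)) = b (P K)

theorem exists_isGreedyChain [Finite V] [Nonempty V] (hab : ∀ v, a v ≤ b v) :
    ∃ P K, IsGreedyChain a b P K := by
  have hnext : ∀ x, ∃ y, a y ≤ b x ∧ ∀ w, a w ≤ b x → b w ≤ b y := fun x => by
    obtain ⟨y, hy, hmax⟩ := exists_max_image {w | a w ≤ b x} b (toFinite _) ⟨x, hab x⟩
    exact ⟨y, hy, hmax⟩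
  choose f hf_step hf_farthest using hnext
  obtain ⟨x₀, hx₀⟩ := Finite.exists_min a
  set P : ℕ → V := fun k => f^[k] x₀
  have hsucc : ∀ k, P (k + 1) = f (P k) := fun k => iterate_succ_apply' f k x₀
  have hmono : Monotone (b ∘ P) := monotone_nat_of_le_succ fun k => by
    simpa [hsucc] using hf_farthest (P k) (P k) (hab _)
  have hstall : ∃ K, b (P (K + 1)) = b (P K) := by
    by_contra! h
    exact not_injective_infinite_finite P
      (strictMono_nat_of_lt_succ fun k => (hmono k.le_succ).lt_of_ne (h k).symm).injective.of_comp
  refine ⟨P, Nat.find hstall, ⟨hx₀, fun k => ?_, fun k w hw => ?_, fun k hk => ?_,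
    Nat.find_spec hstall⟩⟩
  · rw [hsucc]; exact hf_step _
  · rw [hsucc]; exact hf_farthest _ _ hw
  · exact (hmono k.le_succ).lt_of_ne fun h => Nat.find_min hstall hk h.symm

namespace IsGreedyChain

theorem monotone (hP : IsGreedyChain a b P K) (hab : ∀ v, a v ≤ b v) : Monotone (b ∘ P) :=
  monotone_nat_of_le_succ fun k => hP.farthest k _ (hab _)

theorem injOn (hP : IsGreedyChain a b P K) : InjOn P (Iic K) :=
  (strictMonoOn_Iic_of_lt_succ (ψ := b ∘ P) fun k hk => hP.grows k hk).injOn.of_comp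

theorem meets_succ (hP : IsGreedyChain a b P K) (hab : ∀ v, a v ≤ b v) (k : ℕ) :
    a (P k) ≤ b (P (k + 1)) ∧ a (P (k + 1)) ≤ b (P k) :=
  ⟨(hab _).trans (hP.monotone hab k.le_succ), hP.step k⟩

theorem right_lt_left_add_two (hP : IsGreedyChain a b P K) {j : ℕ} (hj : j + 2 ≤ K) :
    b (P j) < a (P (j + 2)) :=
  lt_of_not_ge fun h => (hP.farthest j _ h).not_gt (hP.grows (j + 1) (by omega))

/-- The intervals starting before `P K` ends are closed under adjacency, as `P K` stalls. -/
theorem left_le_right_last (hP : IsGreedyChain a b P K) (hab : ∀ v, a v ≤ b v)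
    {G : SimpleGraph V} (hG : G.Preconnected) (hmeet : ∀ u v, G.Adj u v → a v ≤ b u) (w : V) :
    a w ≤ b (P K) :=
  (hG (P K) w).mem_of_adj_closed (s := {z | a z ≤ b (P K)})
    (fun u v huv hu => (hmeet u v huv).trans (hP.stalls ▸ hP.farthest K u hu)) (hab _)

theorem exists_window (hP : IsGreedyChain a b P K) (hab : ∀ v, a v ≤ b v)
    (hcover : ∀ w, a w ≤ b (P K)) (w : V) :
    ∃ k ≤ K, a (P k) ≤ b w ∧ a w ≤ b (P k) ∧
      ∀ j ≤ K, a (P j) ≤ b w → a w ≤ b (P j) → k ≤ j ∧ j ≤ k + 2 := by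
  have hex : ∃ k, a w ≤ b (P k) := ⟨K, hcover w⟩
  refine ⟨Nat.find hex, Nat.find_min' hex (hcover w), ?_, Nat.find_spec hex,
    fun j hj hjw hwj => ⟨Nat.find_min' hex hwj, ?_⟩⟩
  · rcases h : Nat.find hex with _ | k
    · exact (hP.start w).trans (hab w)
    · have := Nat.find_min hex (show k < Nat.find hex by omega)
      exact (hP.step k).trans ((not_le.1 this).le.trans (hab w))
  · by_contra! hlt
    obtain ⟨i, rfl⟩ : ∃ i, j = i + 2 := ⟨j - 2, by omega⟩
    have hbw : b w ≤ b (P i) :=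
      (hP.farthest _ w (Nat.find_spec hex)).trans (hP.monotone hab (by omega))
    exact (hP.right_lt_left_add_two hj).not_ge (hjw.trans hbw)

end IsGreedyChain

end GreedyChain

theorem exists_isCFON_fin_four_of_interval {V : Type*} [Finite V] [Nontrivial V]
    {G : SimpleGraph V} {a b : V → ℝ} (hab : ∀ v, a v ≤ b v)
    (hrep : ∀ u v, u ≠ v → (G.Adj u v ↔ (Icc (a u) (b u) ∩ Icc (a v) (b v)).Nonempty))
    (hG : G.Preconnected) : ∃ c : V → Fin 4, IsCFON G c := by
  have hadj : ∀ u v, u ≠ v → (G.Adj u v ↔ a u ≤ b v ∧ a v ≤ b u) := fun u v huv =>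
    (hrep u v huv).trans (Icc_inter_Icc_nonempty_iff (hab u) (hab v))
  obtain ⟨P, K, hP⟩ := exists_isGreedyChain hab
  have hcover := hP.left_le_right_last hab hG fun u v huv => ((hadj u v huv.ne).1 huv).2
  rcases Nat.eq_zero_or_pos K with rfl | hK
  · obtain ⟨u, hu⟩ := exists_ne (P 0)
    exact exists_isCFON_fin_four_of_forall_adj hu.symm fun w hw =>
      (hadj w _ hw).2 ⟨hcover w, (hP.start w).trans (hab w)⟩
  refine exists_isCFON_fin_four_of_dominating_seq hP.injOn fun w => ?_
  obtain ⟨k, hk, hkw, hwk, hwin⟩ := hP.exists_window hab hcover w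
  have hnear : ∀ j ≤ K, G.Adj w (P j) → k ≤ j ∧ j ≤ k + 2 := fun j hj hwj =>
    hwin j hj ((hadj _ _ hwj.ne).1 hwj).2 ((hadj _ _ hwj.ne).1 hwj).1
  by_cases hw : w = P k
  · -- `P (k - 1)` would meet `P k` below its window
    have hkK : k < K := by
      by_contra hkK
      obtain ⟨i, rfl⟩ : ∃ i, k = i + 1 := ⟨k - 1, by omega⟩
      have := hwin i (by omega) (hw ▸ (hP.meets_succ hab i).1) (hw ▸ (hP.meets_succ hab i).2)
      omega
    have hne : w ≠ P (k + 1) := hw ▸ hP.injOn.ne (mem_Iic.2 hk) (mem_Iic.2 hkK) (by omega)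
    refine ⟨k + 1, hkK, (hadj _ _ hne).2 ?_, fun j hj hwj => by have := hnear j hj hwj; omega⟩
    exact hw ▸ hP.meets_succ hab k
  · exact ⟨k, hk, (hadj _ _ hw).2 ⟨hwk, hkw⟩, fun j hj hwj => by have := hnear j hj hwj; omega⟩

/-- For a connected interval graph `G` (given by an interval representation
`v ↦ [a v, b v]`) with at least two edges, `2 ≤ χcf(G) ≤ 4`. -/
theorem cfon_interval_bounds {V : Type*} [Fintype V] (G : SimpleGraph V)
    (a b : V → ℝ) (hab : ∀ v : V, a v ≤ b v)
    (hrep : ∀ u v : V, u ≠ v →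
      (G.Adj u v ↔ (Set.Icc (a u) (b u) ∩ Set.Icc (a v) (b v)).Nonempty))
    (hconn : G.Connected)
    (hedges : ∃ e₁ e₂ : Sym2 V, e₁ ∈ G.edgeSet ∧ e₂ ∈ G.edgeSet ∧ e₁ ≠ e₂) :
    2 ≤ sInf {k : ℕ | ∃ c : V → Fin k, IsCFON G c} ∧
      sInf {k : ℕ | ∃ c : V → Fin k, IsCFON G c} ≤ 4 := by
  obtain ⟨e₁, e₂, he₁, he₂, hne⟩ := hedges
  have hV : Nontrivial V := by
    induction e₁ with | h x y => exact ⟨x, y, (G.mem_edgeSet.1 he₁).ne⟩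
  have h4 : 4 ∈ {k : ℕ | ∃ c : V → Fin k, IsCFON G c} :=
    exists_isCFON_fin_four_of_interval hab hrep hconn.preconnected
  exact ⟨le_csInf ⟨4, h4⟩ fun k ⟨c, hc⟩ =>
    hc.two_le hconn.preconnected ⟨e₁, he₁, e₂, he₂, hne⟩, Nat.sInf_le h4⟩
end

section
/- Every finite connected cograph G on at least two vertices admits a conflict-free closed neighborhood coloring with at most 3 colors; that is, χcf[G] ≤ 3. -/
/-- `G` contains an induced path on four vertices. -/
def HasInducedP4 {W : Type*} (G : SimpleGraph W) : Prop :=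
  ∃ a b c d : W, a ≠ c ∧ a ≠ d ∧ b ≠ d ∧
    G.Adj a b ∧ G.Adj b c ∧ G.Adj c d ∧ ¬ G.Adj a c ∧ ¬ G.Adj a d ∧ ¬ G.Adj b d

/-!
Choose an edge `uv` whose closed neighbourhood `N[u] ∪ N[v]` is maximal under inclusion. In a
`P₄`-free graph it is all of `V`: otherwise connectivity yields `w ∉ N[u] ∪ N[v]` adjacent to some
`x ∈ N(u)`, say; `w x u v` is not an induced `P₄`, so `x ~ v`, and then excluding induced `P₄`s
again shows that the edge `ux` dominates strictly more than `uv`. Colouring `u` with `1`, `v`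
with `2` and everything else with `0`, every closed neighbourhood contains `u` or `v`, whose
colour is used only once in the whole graph.
-/

namespace SimpleGraph

variable {V : Type*} (G : SimpleGraph V)

def dominatedBy (u v : V) : Set V :=
  {y | G.Adj u y ∨ G.Adj v y ∨ y = u ∨ y = v}

variable {G}

@[simp]
lemma mem_dominatedBy {u v y : V} :
    y ∈ G.dominatedBy u v ↔ G.Adj u y ∨ G.Adj v y ∨ y = u ∨ y = v :=
  Iff.rfl

lemma dominatedBy_comm (u v : V) : G.dominatedBy u v = G.dominatedBy v u := by
  ext y
  simp only [mem_dominatedBy]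
  tauto

lemma dominatedBy_ssubset_of_adj_of_notMem (hP4 : ¬ HasInducedP4 G) {u v x w : V}
    (huv : G.Adj u v) (hxu : G.Adj x u) (hwx : G.Adj w x) (hw : w ∉ G.dominatedBy u v) :
    G.dominatedBy u v ⊂ G.dominatedBy u x := by
  simp only [mem_dominatedBy, not_or] at hw
  obtain ⟨hwu, hwv, hw_ne_u, hw_ne_v⟩ := hw
  have hxv : G.Adj x v := by
    by_contra hxv
    exact hP4 ⟨w, x, u, v, hw_ne_u, hw_ne_v, fun h => hwv (h ▸ hwx.symm), hwx, hxu, huv,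
      fun h => hwu h.symm, fun h => hwv h.symm, hxv⟩
  refine (Set.ssubset_iff_of_subset ?_).2 ⟨w, Or.inr (Or.inl hwx.symm), by simp [*]⟩
  rintro y (hy | hy | rfl | rfl)
  · exact Or.inl hy
  · by_contra hyx
    simp only [mem_dominatedBy, not_or] at hyx
    obtain ⟨hyu, hyx, hy_ne_u, hy_ne_x⟩ := hyx
    by_cases hyw : G.Adj y w
    · exact hP4 ⟨u, v, y, w, fun h => hy_ne_u h.symm, fun h => hw_ne_u h.symm,
        fun h => hw_ne_v h.symm, huv, hy, hyw, hyu, hwu, hwv⟩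
    · exact hP4 ⟨w, x, v, y, hw_ne_v, fun h => hwv (h ▸ hy), fun h => hy_ne_x h.symm,
        hwx, hxv, hy, fun h => hwv h.symm, fun h => hyw h.symm, hyx⟩
  · exact Or.inr (Or.inr (Or.inl rfl))
  · exact Or.inl huv

lemma exists_dominatedBy_eq_univ [Finite V] (hconn : G.Connected) (hP4 : ¬ HasInducedP4 G)
    (hedge : ∃ u v, G.Adj u v) : ∃ u v, G.Adj u v ∧ G.dominatedBy u v = Set.univ := by
  obtain ⟨⟨u, v⟩, huv, hmax⟩ := exists_maximalFor_of_wellFoundedGT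
    (fun e : V × V => G.Adj e.1 e.2) (fun e => G.dominatedBy e.1 e.2)
    (by obtain ⟨u, v, h⟩ := hedge; exact ⟨(u, v), h⟩)
  have not_ssubset : ∀ {a b}, G.Adj a b → ¬ G.dominatedBy u v ⊂ G.dominatedBy a b :=
    fun hab hlt => hlt.2 (hmax (j := (_, _)) hab hlt.1)
  refine ⟨u, v, huv, Set.eq_univ_of_forall fun w => ?_⟩
  by_contra hw
  obtain ⟨⟨⟨x, y⟩, hxy⟩, -, hx, hy⟩ :=
    (hconn u w).some.exists_boundary_dart (G.dominatedBy u v) (by simp) hw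
  rcases hx with hux | hvx | rfl | rfl
  · exact not_ssubset hux <|
      dominatedBy_ssubset_of_adj_of_notMem hP4 huv hux.symm hxy.symm hy
  · rw [dominatedBy_comm] at hy not_ssubset
    exact not_ssubset hvx <|
      dominatedBy_ssubset_of_adj_of_notMem hP4 huv.symm hvx.symm hxy.symm hy
  · exact hy (Or.inl hxy)
  · exact hy (Or.inr (Or.inl hxy))

end SimpleGraph

lemma isCFCN_of_forall_exists_unique_color {W S : Type*} {H : SimpleGraph W} {c : W → S}
    (h : ∀ v, ∃ u, (H.Adj v u ∨ u = v) ∧ ∀ w, c w = c u → w = u) : IsCFCN H c := by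
  intro v
  obtain ⟨u, hu, huniq⟩ := h v
  exact ⟨c u, u, ⟨hu, rfl⟩, fun w hw => huniq w hw.2⟩

open Classical in
lemma exists_isCFCN_fin_three_of_dominatedBy_eq_univ {W : Type*} {H : SimpleGraph W} {u v : W}
    (hdom : H.dominatedBy u v = Set.univ) : ∃ c : W → Fin 3, IsCFCN H c := by
  refine ⟨fun y => if y = u then 1 else if y = v then 2 else 0,
    isCFCN_of_forall_exists_unique_color fun y => ?_⟩
  have hy : y ∈ H.dominatedBy u v := hdom ▸ Set.mem_univ y
  rcases hy with hy | hy | rfl | rfl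
  · exact ⟨u, Or.inl hy.symm, fun w => by split_ifs <;> simp_all⟩
  · exact ⟨v, Or.inl hy.symm, fun w => by split_ifs <;> simp_all⟩
  · exact ⟨y, Or.inr rfl, fun w => by split_ifs <;> simp_all⟩
  · exact ⟨y, Or.inr rfl, fun w => by split_ifs <;> simp_all⟩

/-- Every connected cograph (`P₄`-free graph) on at least two vertices has a CF-CN
coloring with at most 3 colors; that is, `χcf[G] ≤ 3`. -/
theorem cfcn_cograph_le_three {V : Type*} [Fintype V] (G : SimpleGraph V)
    (hconn : G.Connected) (hcard : 2 ≤ Fintype.card V)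
    (hP4free : ¬ HasInducedP4 G) :
    ∃ c : V → Fin 3, IsCFCN G c := by
  have : Nontrivial V := Fintype.one_lt_card_iff_nontrivial.1 hcard
  obtain ⟨w⟩ := hconn.nonempty
  obtain ⟨u, v, -, hdom⟩ := G.exists_dominatedBy_eq_univ hconn hP4free
    ⟨w, hconn.preconnected.exists_adj_of_nontrivial w⟩
  exact exists_isCFCN_fin_three_of_dominatedBy_eq_univ hdom
end

section
/- Every finite connected cograph G on at least two vertices admits a conflict-free open neighborhood coloring with at most 3 colors; that is, χcf(G) ≤ 3. -/
section

variable {V : Type*} {G : SimpleGraph V}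

lemma hasInducedP4_of_adj {a b c d : V} (hab : G.Adj a b) (hbc : G.Adj b c) (hcd : G.Adj c d)
    (hac : ¬ G.Adj a c) (had : ¬ G.Adj a d) (hbd : ¬ G.Adj b d) : HasInducedP4 G :=
  ⟨a, b, c, d, by rintro rfl; exact had hcd, by rintro rfl; exact hac hcd.symm,
    by rintro rfl; exact had hab, hab, hbc, hcd, hac, had, hbd⟩

lemma adj_of_adj_of_not_hasInducedP4 (hG : ¬ HasInducedP4 G) {x y z w : V} (hxy : G.Adj x y)
    (hzw : G.Adj z w) (hzx : ¬ G.Adj z x) (hzy : ¬ G.Adj z y) (hwx : G.Adj w x) : G.Adj w y :=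
  by_contra fun hwy ↦ hG (hasInducedP4_of_adj hzw hwx hxy hzx hzy hwy)

lemma neighborSet_union_ssubset_of_not_hasInducedP4 (hG : ¬ HasInducedP4 G) {x y z w : V}
    (hxy : G.Adj x y) (hzw : G.Adj z w) (hz : z ∉ G.neighborSet x ∪ G.neighborSet y)
    (hw : w ∈ G.neighborSet x ∪ G.neighborSet y) :
    G.Adj x w ∧ G.neighborSet x ∪ G.neighborSet y ⊂ G.neighborSet x ∪ G.neighborSet w := by
  simp only [Set.mem_union, SimpleGraph.mem_neighborSet, not_or] at hz hw
  obtain ⟨hxz, hyz⟩ := hz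
  have hxw : G.Adj x w := by
    rcases hw with hxw | hyw
    · exact hxw
    · exact (adj_of_adj_of_not_hasInducedP4 hG hxy.symm hzw (hyz ∘ .symm) (hxz ∘ .symm)
        hyw.symm).symm
  have hyw : G.Adj y w :=
    (adj_of_adj_of_not_hasInducedP4 hG hxy hzw (hxz ∘ .symm) (hyz ∘ .symm) hxw.symm).symm
  refine ⟨hxw, Set.union_subset Set.subset_union_left fun u hyu ↦ ?_, fun hsub ↦ ?_⟩
  · by_contra! hu
    obtain ⟨hxu, hwu⟩ : ¬ G.Adj x u ∧ ¬ G.Adj w u := by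
      simpa only [Set.mem_union, SimpleGraph.mem_neighborSet, not_or] using hu
    by_cases hzu : G.Adj z u
    · exact hG (hasInducedP4_of_adj hxy hyu hzu.symm hxu hxz hyz)
    · exact hG (hasInducedP4_of_adj hzw hyw.symm hyu (hyz ∘ .symm) hzu hwu)
  · rcases hsub (Or.inr hzw.symm) with hxz' | hyz'
    exacts [hxz hxz', hyz hyz']

lemma exists_dominating_edge_of_not_hasInducedP4 [Finite V] (hconn : G.Preconnected)
    (hG : ¬ HasInducedP4 G) {a b : V} (hab : G.Adj a b) :
    ∃ x y, G.Adj x y ∧ ∀ v, G.Adj x v ∨ G.Adj y v := by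
  obtain ⟨⟨x, y⟩, hxy, hmax⟩ := (Set.toFinite {p : V × V | G.Adj p.1 p.2}).exists_maximalFor
    (fun p ↦ G.neighborSet p.1 ∪ G.neighborSet p.2) _ ⟨(a, b), hab⟩
  refine ⟨x, y, hxy, fun v ↦ by_contra fun hv ↦ ?_⟩
  obtain ⟨d, -, hd₁, hd₂⟩ := (hconn x v).some.exists_boundary_dart
    (G.neighborSet x ∪ G.neighborSet y) (Or.inr hxy.symm) hv
  obtain ⟨hxw, hlt⟩ :=
    neighborSet_union_ssubset_of_not_hasInducedP4 hG hxy d.adj.symm hd₂ hd₁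
  exact hlt.not_subset (hmax (j := (x, d.fst)) hxw hlt.subset)

lemma isCFON_of_dominating_edge [DecidableEq V] {x y : V} (hxy : G.Adj x y)
    (hdom : ∀ v, G.Adj x v ∨ G.Adj y v) :
    IsCFON G (fun v ↦ if v = x then (1 : Fin 3) else if v = y then 2 else 0) := by
  intro v
  rcases hdom v with hxv | hyv
  · refine ⟨1, x, ⟨hxv.symm, by simp⟩, fun u ⟨_, hu⟩ ↦ ?_⟩
    dsimp only at hu
    split_ifs at hu <;> simp_all
  · refine ⟨2, y, ⟨hyv.symm, by simp [hxy.ne.symm]⟩, fun u ⟨_, hu⟩ ↦ ?_⟩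
    dsimp only at hu
    split_ifs at hu <;> simp_all

end

/-- Every connected cograph (`P₄`-free graph) on at least two vertices has a CF-ON
coloring with at most 3 colors; that is, `χcf(G) ≤ 3`. -/
theorem cfon_cograph_le_three {V : Type*} [Fintype V] (G : SimpleGraph V)
    (hconn : G.Connected) (hcard : 2 ≤ Fintype.card V)
    (hP4free : ¬ HasInducedP4 G) :
    ∃ c : V → Fin 3, IsCFON G c := by
  classical
  have : Nontrivial V := Fintype.one_lt_card_iff_nontrivial.mp hcard
  obtain ⟨a⟩ := hconn.nonempty
  obtain ⟨b, hab⟩ := hconn.preconnected.exists_adj_of_nontrivial a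
  obtain ⟨x, y, hxy, hdom⟩ :=
    exists_dominating_edge_of_not_hasInducedP4 hconn.preconnected hP4free hab
  exact ⟨_, isCFON_of_dominating_edge hxy hdom⟩
end
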